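/- arXiv:1512.00797 — 2 statements merged into one kernel-verified Lean document; each statement's English description precedes it below -/
import Mathlib

section
/- Let Λ be a row-finite locally convex k-graph and Λ̃ its desourcification. Then Λ̃ is aperiodic if and only if Λ is aperiodic. -/
open scoped ENat

/-! ## `k`-graphs -/

/-- The `i`-th standard generator of `ℕᵏ`. -/
def unitVec {k : ℕ} (i : Fin k) : Fin k → ℕ := fun j => if j = i then 1 else 0

/-- A higher-rank graph (`k`-graph): a countable category together with a degree
functor `d : Λ → ℕᵏ` satisfying the unique factorization property.  Morphisms are
composed in the "path" order: `comp f g` is defined when `src f = rng g`. -/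
structure KGraph (k : ℕ) : Type 1 where
  Obj : Type
  Mor : Type
  mor_countable : Countable Mor
  src : Mor → Obj
  rng : Mor → Obj
  comp : ∀ f g : Mor, src f = rng g → Mor
  id : Obj → Mor
  deg : Mor → Fin k → ℕ
  src_id : ∀ v, src (id v) = v
  rng_id : ∀ v, rng (id v) = v
  deg_id : ∀ v, deg (id v) = 0
  src_comp : ∀ f g h, src (comp f g h) = src g
  rng_comp : ∀ f g h, rng (comp f g h) = rng f
  deg_comp : ∀ f g h, deg (comp f g h) = deg f + deg g
  id_comp : ∀ f, comp (id (rng f)) f (src_id (rng f)) = f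
  comp_id : ∀ f, comp f (id (src f)) ((rng_id (src f)).symm) = f
  comp_assoc : ∀ f g h (hfg : src f = rng g) (hgh : src g = rng h),
    comp (comp f g hfg) h ((src_comp f g hfg).trans hgh) =
      comp f (comp g h hgh) (hfg.trans (rng_comp g h hgh).symm)
  factorization : ∀ (f : Mor) (m n : Fin k → ℕ), deg f = m + n →
    ∃! p : Mor × Mor, ∃ h : src p.1 = rng p.2,
      deg p.1 = m ∧ deg p.2 = n ∧ comp p.1 p.2 h = f

namespace KGraph

variable {k : ℕ}

/-- `Λ` is row-finite if every `vΛⁿ` is finite. -/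
def RowFinite (Λ : KGraph k) : Prop :=
  ∀ (v : Λ.Obj) (n : Fin k → ℕ), {f : Λ.Mor | Λ.rng f = v ∧ Λ.deg f = n}.Finite

/-- `Λ` has no sources if every `vΛⁿ` is nonempty. -/
def NoSources (Λ : KGraph k) : Prop :=
  ∀ (v : Λ.Obj) (n : Fin k → ℕ), ∃ f : Λ.Mor, Λ.rng f = v ∧ Λ.deg f = n

/-- `Λ` is locally convex. -/
def LocallyConvex (Λ : KGraph k) : Prop :=
  ∀ (v : Λ.Obj) (i j : Fin k), i ≠ j →
    ∀ f g : Λ.Mor, Λ.rng f = v → Λ.deg f = unitVec i → Λ.rng g = v → Λ.deg g = unitVec j →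
      (∃ f' : Λ.Mor, Λ.rng f' = Λ.src f ∧ Λ.deg f' = unitVec j) ∧
      (∃ g' : Λ.Mor, Λ.rng g' = Λ.src g ∧ Λ.deg g' = unitVec i)

/-- The set `Λ^{≤ n}`. -/
def LeSet (Λ : KGraph k) (n : Fin k → ℕ) : Set Λ.Mor :=
  {f | Λ.deg f ≤ n ∧ ∀ i : Fin k, Λ.deg f + unitVec i ≤ n →
    ¬∃ g : Λ.Mor, Λ.rng g = Λ.src f ∧ Λ.deg g = unitVec i}

/-- Condition (MT3): any two vertices can be connected to a common vertex. -/
def MT3 (Λ : KGraph k) : Prop :=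
  ∀ v₁ v₂ : Λ.Obj, ∃ w : Λ.Obj,
    (∃ f : Λ.Mor, Λ.rng f = v₁ ∧ Λ.src f = w) ∧ (∃ f : Λ.Mor, Λ.rng f = v₂ ∧ Λ.src f = w)

/-- A hereditary set of vertices. -/
def Hereditary (Λ : KGraph k) (H : Set Λ.Obj) : Prop :=
  ∀ v w : Λ.Obj, v ∈ H → (∃ f : Λ.Mor, Λ.rng f = v ∧ Λ.src f = w) → w ∈ H

/-- A saturated set of vertices. -/
def Saturated (Λ : KGraph k) (H : Set Λ.Obj) : Prop :=
  ∀ (v : Λ.Obj) (i : Fin k),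
    (∀ f ∈ Λ.LeSet (unitVec i), Λ.rng f = v → Λ.src f ∈ H) → v ∈ H

/-- A maximal tail: a nonempty vertex set satisfying (MT1), (MT2) and (MT3). -/
def MaximalTail (Λ : KGraph k) (M : Set Λ.Obj) : Prop :=
  M.Nonempty ∧
  (∀ v w : Λ.Obj, w ∈ M → (∃ f : Λ.Mor, Λ.rng f = v ∧ Λ.src f = w) → v ∈ M) ∧
  (∀ v ∈ M, ∀ i : Fin k, ∃ f ∈ Λ.LeSet (unitVec i), Λ.rng f = v ∧ Λ.src f ∈ M) ∧
  (∀ v₁ ∈ M, ∀ v₂ ∈ M, ∃ w ∈ M,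
    (∃ f : Λ.Mor, Λ.rng f = v₁ ∧ Λ.src f = w) ∧ (∃ f : Λ.Mor, Λ.rng f = v₂ ∧ Λ.src f = w))

/-- The quotient graph `Λ ∖ H` for a hereditary `H`: vertices `Λ⁰ ∖ H` and
morphisms those of `Λ` with source outside `H`. -/
def minus (Λ : KGraph k) (H : Set Λ.Obj) (hH : Λ.Hereditary H) : KGraph k where
  Obj := {v : Λ.Obj // v ∉ H}
  Mor := {f : Λ.Mor // Λ.src f ∉ H}
  mor_countable := by haveI := Λ.mor_countable; exact inferInstance
  src f := ⟨Λ.src f.1, f.2⟩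
  rng f := ⟨Λ.rng f.1, fun hm => f.2 (hH _ _ hm ⟨f.1, rfl, rfl⟩)⟩
  comp f g h := ⟨Λ.comp f.1 g.1 (congrArg Subtype.val h), by
    rw [Λ.src_comp]; exact g.2⟩
  id v := ⟨Λ.id v.1, by rw [Λ.src_id]; exact v.2⟩
  deg f := Λ.deg f.1
  src_id v := Subtype.ext (Λ.src_id v.1)
  rng_id v := Subtype.ext (Λ.rng_id v.1)
  deg_id v := Λ.deg_id v.1
  src_comp f g h := Subtype.ext (Λ.src_comp f.1 g.1 _)
  rng_comp f g h := Subtype.ext (Λ.rng_comp f.1 g.1 _)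
  deg_comp f g h := Λ.deg_comp f.1 g.1 _
  id_comp f := Subtype.ext (Λ.id_comp f.1)
  comp_id f := Subtype.ext (Λ.comp_id f.1)
  comp_assoc f g h hfg hgh := Subtype.ext (Λ.comp_assoc f.1 g.1 h.1 _ _)
  factorization := by
    rintro ⟨f, hf⟩ m n hdeg
    obtain ⟨⟨p₁, p₂⟩, ⟨h, hm, hn, hcomp⟩, huniq⟩ := Λ.factorization f m n hdeg
    have hp₂ : Λ.src p₂ ∉ H := by
      have hs : Λ.src (Λ.comp p₁ p₂ h) = Λ.src p₂ := Λ.src_comp _ _ _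
      rw [hcomp] at hs
      rw [← hs]; exact hf
    have hp₁ : Λ.src p₁ ∉ H := fun hmem => hp₂ (hH _ _ (h ▸ hmem) ⟨p₂, rfl, rfl⟩)
    refine ⟨(⟨p₁, hp₁⟩, ⟨p₂, hp₂⟩), ⟨Subtype.ext h, hm, hn, Subtype.ext hcomp⟩, ?_⟩
    rintro ⟨⟨q₁, hq₁⟩, ⟨q₂, hq₂⟩⟩ ⟨h', hm', hn', hcomp'⟩
    have hq := huniq (q₁, q₂)
      ⟨congrArg Subtype.val h', hm', hn', congrArg Subtype.val hcomp'⟩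
    rw [Prod.ext_iff]
    exact ⟨Subtype.ext (congrArg Prod.fst hq), Subtype.ext (congrArg Prod.snd hq)⟩

/-! ## Boundary paths -/

/-- `minDeg m d = m ∧ d`, the pointwise minimum of `m ∈ ℕᵏ` and a degree `d ∈ (ℕ∪{∞})ᵏ`,
viewed in `ℕᵏ`. -/
noncomputable def minDeg {k : ℕ} (m : Fin k → ℕ) (d : Fin k → ℕ∞) : Fin k → ℕ :=
  fun i => (min (m i : ℕ∞) (d i)).toNat

lemma minDeg_ne_top {k : ℕ} (m : Fin k → ℕ) (d : Fin k → ℕ∞) (i : Fin k) :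
    min (m i : ℕ∞) (d i) ≠ ⊤ := by
  intro h
  exact ENat.coe_ne_top (m i) (top_le_iff.mp (h ▸ min_le_left (m i : ℕ∞) (d i)))

lemma minDeg_le_deg {k : ℕ} (m : Fin k → ℕ) (d : Fin k → ℕ∞) (i : Fin k) :
    ((minDeg m d i : ℕ∞)) ≤ d i := by
  have h := ENat.coe_toNat (minDeg_ne_top m d i)
  calc ((minDeg m d i : ℕ∞)) = min (m i : ℕ∞) (d i) := h
    _ ≤ d i := min_le_right _ _

lemma minDeg_mono {k : ℕ} {m n : Fin k → ℕ} (h : m ≤ n) (d : Fin k → ℕ∞) :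
    minDeg m d ≤ minDeg n d := by
  intro i
  exact ENat.toNat_le_toNat (min_le_min (by exact_mod_cast h i) le_rfl) (minDeg_ne_top n d i)

/-- A boundary path in `Λ`: a degree-preserving functor `x : Ω_{k,m} → Λ`
(for `m = bdeg ∈ (ℕ ∪ {∞})ᵏ`) such that `p ≤ m` and `p i = m i` imply
`x(p)Λ^{eᵢ} = ∅`. -/
structure BPath {k : ℕ} (Λ : KGraph k) : Type where
  bdeg : Fin k → ℕ∞
  mor : ∀ p q : Fin k → ℕ, p ≤ q → (∀ i, ((q i : ℕ∞)) ≤ bdeg i) → Λ.Mor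
  deg_mor : ∀ p q hpq hq, Λ.deg (mor p q hpq hq) = q - p
  mor_self : ∀ p hp, mor p p le_rfl hp = Λ.id (Λ.rng (mor p p le_rfl hp))
  src_mor : ∀ p q hpq hq, Λ.src (mor p q hpq hq) = Λ.rng (mor q q le_rfl hq)
  rng_mor : ∀ p q hpq (hq : ∀ i, ((q i : ℕ∞)) ≤ bdeg i) (hp : ∀ i, ((p i : ℕ∞)) ≤ bdeg i),
    Λ.rng (mor p q hpq hq) = Λ.rng (mor p p le_rfl hp)
  comp_mor : ∀ p q r (hpq : p ≤ q) (hqr : q ≤ r) (hr : ∀ i, ((r i : ℕ∞)) ≤ bdeg i)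
      (hq : ∀ i, ((q i : ℕ∞)) ≤ bdeg i),
    Λ.comp (mor p q hpq hq) (mor q r hqr hr)
        ((src_mor p q hpq hq).trans (rng_mor q r hqr hr hq).symm) =
      mor p r (hpq.trans hqr) hr
  boundary : ∀ (p : Fin k → ℕ) (hp : ∀ i, ((p i : ℕ∞)) ≤ bdeg i) (i : Fin k),
    ((p i : ℕ∞)) = bdeg i →
      ¬∃ g : Λ.Mor, Λ.rng g = Λ.rng (mor p p le_rfl hp) ∧ Λ.deg g = unitVec i

namespace BPath

variable {Λ : KGraph k}

/-- The vertex `x(m ∧ d(x))` of a boundary path `x`. -/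
noncomputable def vtx (x : BPath Λ) (m : Fin k → ℕ) : Λ.Obj :=
  Λ.rng (x.mor (minDeg m x.bdeg) (minDeg m x.bdeg) le_rfl (fun i => minDeg_le_deg m x.bdeg i))

/-- The range `x(0)` of a boundary path. -/
noncomputable def range (x : BPath Λ) : Λ.Obj := x.vtx 0

/-- The segment `x(m ∧ d(x), n ∧ d(x))` of a boundary path. -/
noncomputable def seg (x : BPath Λ) (m n : Fin k → ℕ) (h : m ≤ n) : Λ.Mor :=
  x.mor (minDeg m x.bdeg) (minDeg n x.bdeg) (minDeg_mono h x.bdeg)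
    (fun i => minDeg_le_deg n x.bdeg i)

/-- `σᵃ(x) = σᵇ(x)`: the two shifted boundary paths coincide. -/
def shiftsEq (x : BPath Λ) (a b : Fin k → ℕ) : Prop :=
  (∀ i, x.bdeg i - (a i : ℕ∞) = x.bdeg i - (b i : ℕ∞)) ∧
  ∀ (p q : Fin k → ℕ) (hpq : p ≤ q)
    (hqa : ∀ i, (((q + a) i : ℕ∞)) ≤ x.bdeg i) (hqb : ∀ i, (((q + b) i : ℕ∞)) ≤ x.bdeg i),
    x.mor (p + a) (q + a) (add_le_add_left hpq a) hqa =
      x.mor (p + b) (q + b) (add_le_add_left hpq b) hqb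

end BPath

/-- `Λ` is aperiodic. -/
def Aperiodic (Λ : KGraph k) : Prop :=
  ∀ (v : Λ.Obj) (m n : Fin k → ℕ), m ≠ n →
    ∃ x : BPath Λ, x.range = v ∧
      ((fun i => m i - minDeg m x.bdeg i) ≠ (fun i => n i - minDeg n x.bdeg i) ∨
        ¬ x.shiftsEq (minDeg m x.bdeg) (minDeg n x.bdeg))

/-- `Λ` is strongly aperiodic: every quotient graph is aperiodic. -/
def StronglyAperiodic (Λ : KGraph k) : Prop :=
  ∀ (H : Set Λ.Obj) (hH : Λ.Hereditary H), Λ.Saturated H → Aperiodic (Λ.minus H hH)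

end KGraph

open scoped Classical

namespace KGraph

/-! ## Kumjian–Pask families and algebras -/

/-- A Kumjian–Pask `Λ`-family `(P, S, S')` in a (possibly nonunital) `R`-algebra `A`.
Here `S` is extended to vertices by `S (id v) = P v` (and similarly for the ghost
elements `S'`), which encodes the usual convention `s_v := p_v`. -/
structure KPFamily {k : ℕ} (Λ : KGraph k) (R : Type) [CommRing R] (A : Type)
    [NonUnitalRing A] [Module R A] [SMulCommClass R A A] [IsScalarTower R A A] where
  P : Λ.Obj → A
  S : Λ.Mor → A
  S' : Λ.Mor → A
  S_id : ∀ v, S (Λ.id v) = P v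
  S'_id : ∀ v, S' (Λ.id v) = P v
  P_mul_self : ∀ v, P v * P v = P v
  P_orthogonal : ∀ v w, v ≠ w → P v * P w = 0
  S_comp : ∀ f g (h : Λ.src f = Λ.rng g), S f * S g = S (Λ.comp f g h)
  S'_comp : ∀ f g (h : Λ.src f = Λ.rng g), S' g * S' f = S' (Λ.comp f g h)
  P_S : ∀ f, P (Λ.rng f) * S f = S f
  S_P : ∀ f, S f * P (Λ.src f) = S f
  P_S' : ∀ f, P (Λ.src f) * S' f = S' f
  S'_P : ∀ f, S' f * P (Λ.rng f) = S' f
  KP3 : ∀ (n : Fin k → ℕ), n ≠ 0 → ∀ f ∈ Λ.LeSet n, ∀ g ∈ Λ.LeSet n,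
    S' f * S g = if f = g then P (Λ.src f) else 0
  KP4 : ∀ (v : Λ.Obj) (n : Fin k → ℕ), n ≠ 0 →
    P v = ∑ᶠ f ∈ {g : Λ.Mor | g ∈ Λ.LeSet n ∧ Λ.rng g = v}, S f * S' f

/-- `A` (a possibly nonunital `R`-algebra) is *the* Kumjian–Pask algebra of `Λ`:
it carries a Kumjian–Pask family which spans it and is universal among
Kumjian–Pask families. -/
structure IsKPAlgebra {k : ℕ} (Λ : KGraph k) (R : Type) [CommRing R] (A : Type)
    [NonUnitalRing A] [Module R A] [SMulCommClass R A A] [IsScalarTower R A A] :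
    Type 1 where
  fam : KPFamily Λ R A
  spanning : ∀ a : A, a ∈ Submodule.span R
    {x : A | ∃ f g : Λ.Mor, Λ.src f = Λ.src g ∧ x = fam.S f * fam.S' g}
  universal : ∀ (B : Type) [NonUnitalRing B] [Module R B] [SMulCommClass R B B]
      [IsScalarTower R B B] (F : KPFamily Λ R B),
      ∃ φ : A →ₙₐ[R] B, (∀ v, φ (fam.P v) = F.P v) ∧
        (∀ f, φ (fam.S f) = F.S f) ∧ (∀ f, φ (fam.S' f) = F.S' f)

variable {k : ℕ} {Λ : KGraph k} {R : Type} [CommRing R] {A : Type}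
  [NonUnitalRing A] [Module R A] [SMulCommClass R A A] [IsScalarTower R A A]

/-- The degree-`n` homogeneous component of the `ℤᵏ`-grading of a Kumjian–Pask algebra. -/
def KPFamily.component (F : KPFamily Λ R A) (n : Fin k → ℤ) : Submodule R A :=
  Submodule.span R {x : A | ∃ f g : Λ.Mor, Λ.src f = Λ.src g ∧
    (fun i => (Λ.deg f i : ℤ) - (Λ.deg g i : ℤ)) = n ∧ x = F.S f * F.S' g}

/-- A two-sided ideal is graded if it is spanned by its intersections with the
homogeneous components. -/
def KPFamily.IsGradedIdeal (F : KPFamily Λ R A) (I : TwoSidedIdeal A) : Prop :=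
  (I : Set A) ⊆
    ↑(Submodule.span R (⋃ n : Fin k → ℤ, ((I : Set A) ∩ (F.component n : Set A))))

/-- A two-sided ideal is basic if `r • p_v ∈ I` for `r ≠ 0` implies `p_v ∈ I`. -/
def KPFamily.IsBasicIdeal (F : KPFamily Λ R A) (I : TwoSidedIdeal A) : Prop :=
  ∀ (r : R) (v : Λ.Obj), r ≠ 0 → r • F.P v ∈ I → F.P v ∈ I

/-- The span `I_H = span_R {s_f s_g* : s(f) = s(g) ∈ H}` (a two-sided ideal when `H`
is saturated and hereditary). -/
def KPFamily.IH (F : KPFamily Λ R A) (H : Set Λ.Obj) : Submodule R A :=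
  Submodule.span R {x : A | ∃ f g : Λ.Mor, Λ.src f = Λ.src g ∧ Λ.src f ∈ H ∧
    x = F.S f * F.S' g}

end KGraph

/-! ## Prime and primitive rings and ideals -/

/-- A two-sided ideal `P` is prime: it is proper, and `I₁I₂ ⊆ P` implies `I₁ ⊆ P` or
`I₂ ⊆ P` for two-sided ideals `I₁, I₂`. -/
def IsPrimeTwoSidedIdeal {A : Type} [NonUnitalRing A] (P : TwoSidedIdeal A) : Prop :=
  (P : Set A) ≠ Set.univ ∧
  ∀ I J : TwoSidedIdeal A, (∀ x ∈ I, ∀ y ∈ J, x * y ∈ P) →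
    (I : Set A) ⊆ (P : Set A) ∨ (J : Set A) ⊆ (P : Set A)

/-- A (possibly nonunital) ring is prime if its zero ideal is prime. -/
def IsPrimeRing (A : Type) [NonUnitalRing A] : Prop :=
  IsPrimeTwoSidedIdeal (⊥ : TwoSidedIdeal A)

/-- A two-sided ideal `I` of a (possibly nonunital) ring is left primitive: there is a
simple left module (for the quotient ring, encoded as an `A`-module structure on an
additive group `M`) whose annihilator is exactly `I`.  For `I = ⊥` this says that `A`
has a faithful simple left module. -/
def IsPrimitiveTwoSidedIdeal {A : Type} [NonUnitalRing A] (I : TwoSidedIdeal A) : Prop :=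
  ∃ (M : Type) (_ : AddCommGroup M) (sm : A → M → M),
    (∀ a b m, sm (a + b) m = sm a m + sm b m) ∧
    (∀ a m n, sm a (m + n) = sm a m + sm a n) ∧
    (∀ a b m, sm (a * b) m = sm a (sm b m)) ∧
    (∃ a m, sm a m ≠ 0) ∧
    (∀ N : AddSubgroup M, (∀ a : A, ∀ m ∈ N, sm a m ∈ N) → N = ⊥ ∨ N = ⊤) ∧
    {a : A | ∀ m, sm a m = 0} = (I : Set A)

/-- A (possibly nonunital) ring is left primitive if it has a faithful simple left
module. -/
def IsLeftPrimitiveRing (A : Type) [NonUnitalRing A] : Prop :=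
  IsPrimitiveTwoSidedIdeal (⊥ : TwoSidedIdeal A)

namespace KGraph

/-! ## The desourcification -/

variable {k : ℕ}

/-- The key invariant of a pair `(x; m)` in `V_Λ`: the vertex `x(m ∧ d(x))` and
`m - m ∧ d(x)`.  Two pairs are `≈`-equivalent iff their keys agree. -/
noncomputable def vkey (Λ : KGraph k) : BPath Λ × (Fin k → ℕ) → Λ.Obj × (Fin k → ℕ) :=
  fun t => (t.1.vtx t.2, fun i => t.2 i - minDeg t.2 t.1.bdeg i)

/-- The vertex set `V_Λ / ≈` of the desourcification. -/
def VQ (Λ : KGraph k) : Type := Quotient (Setoid.ker (vkey Λ))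

/-- The class `[x; m]`. -/
noncomputable def vmk (Λ : KGraph k) (x : BPath Λ) (m : Fin k → ℕ) : VQ Λ :=
  Quotient.mk (Setoid.ker (vkey Λ)) (x, m)

/-- The set `P_Λ` of triples `(x; (m, n))` with `m ≤ n`. -/
def PPre (Λ : KGraph k) : Type := {t : BPath Λ × ((Fin k → ℕ) × (Fin k → ℕ)) // t.2.1 ≤ t.2.2}

/-- The key invariant of `(x; (m, n))`: the segment `x(m ∧ d(x), n ∧ d(x))`,
`m - m ∧ d(x)` and `n - m`.  Two triples are `∼`-equivalent iff their keys agree. -/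
noncomputable def pkey (Λ : KGraph k) : PPre Λ → Λ.Mor × ((Fin k → ℕ) × (Fin k → ℕ)) :=
  fun t => (t.1.1.seg t.1.2.1 t.1.2.2 t.2,
    (fun i => t.1.2.1 i - minDeg t.1.2.1 t.1.1.bdeg i, fun i => t.1.2.2 i - t.1.2.1 i))

/-- The morphism set `P_Λ / ∼` of the desourcification. -/
def PQ (Λ : KGraph k) : Type := Quotient (Setoid.ker (pkey Λ))

/-- The class `[x; (m, n)]`. -/
noncomputable def pmk (Λ : KGraph k) (x : BPath Λ) (m n : Fin k → ℕ) (h : m ≤ n) : PQ Λ :=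
  Quotient.mk (Setoid.ker (pkey Λ)) ⟨(x, (m, n)), h⟩

/-- `w` is the boundary path `x(0, a) σᵇ(y)` obtained by gluing the initial segment
`x(0,a)` of `x` with the shift `σᵇ(y)` of `y`. -/
def IsGluing {Λ : KGraph k} (x : BPath Λ) (a : Fin k → ℕ) (y : BPath Λ) (b : Fin k → ℕ)
    (w : BPath Λ) : Prop :=
  (∀ i, w.bdeg i = (a i : ℕ∞) + (y.bdeg i - (b i : ℕ∞))) ∧
  (∀ (h1 : (0 : Fin k → ℕ) ≤ a) (h2 : ∀ i, ((a i : ℕ∞)) ≤ w.bdeg i)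
      (h3 : ∀ i, ((a i : ℕ∞)) ≤ x.bdeg i),
    w.mor 0 a h1 h2 = x.mor 0 a h1 h3) ∧
  (∀ (p q : Fin k → ℕ) (hpq : p ≤ q) (h2 : ∀ i, (((a + q) i : ℕ∞)) ≤ w.bdeg i)
      (h4 : ∀ i, (((b + q) i : ℕ∞)) ≤ y.bdeg i),
    w.mor (a + p) (a + q) (add_le_add_right hpq a) h2 =
      y.mor (b + p) (b + q) (add_le_add_right hpq b) h4)

/-- `Λt` is (a realization of) the desourcification `Λ̃` of `Λ`: its vertices and
morphisms are identified with `V_Λ/≈` and `P_Λ/∼`, with range, source, degree,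
identities and composition given by the defining formulas of Farthing's construction. -/
structure Desourcification (Λ Λt : KGraph k) : Type where
  eObj : VQ Λ ≃ Λt.Obj
  eMor : PQ Λ ≃ Λt.Mor
  rng_eq : ∀ (x : BPath Λ) (m n : Fin k → ℕ) (h : m ≤ n),
    Λt.rng (eMor (pmk Λ x m n h)) = eObj (vmk Λ x m)
  src_eq : ∀ (x : BPath Λ) (m n : Fin k → ℕ) (h : m ≤ n),
    Λt.src (eMor (pmk Λ x m n h)) = eObj (vmk Λ x n)
  deg_eq : ∀ (x : BPath Λ) (m n : Fin k → ℕ) (h : m ≤ n),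
    Λt.deg (eMor (pmk Λ x m n h)) = n - m
  id_eq : ∀ (x : BPath Λ) (m : Fin k → ℕ),
    Λt.id (eObj (vmk Λ x m)) = eMor (pmk Λ x m m le_rfl)
  comp_eq : ∀ (x : BPath Λ) (m n : Fin k → ℕ) (hmn : m ≤ n)
      (y : BPath Λ) (p q : Fin k → ℕ) (hpq : p ≤ q)
      (h : Λt.src (eMor (pmk Λ x m n hmn)) = Λt.rng (eMor (pmk Λ y p q hpq)))
      (w : BPath Λ), IsGluing x (minDeg n x.bdeg) y (minDeg p y.bdeg) w →
    Λt.comp (eMor (pmk Λ x m n hmn)) (eMor (pmk Λ y p q hpq)) h =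
      eMor (pmk Λ w m (n + (q - p)) (hmn.trans le_self_add))

/-- `w = l x` is the boundary path extending the boundary path `x` by the
morphism `l` (with `x(0) = s(l)`). -/
def IsExtension {Λ : KGraph k} (l : Λ.Mor) (x : BPath Λ) (w : BPath Λ) : Prop :=
  (∀ i, w.bdeg i = (Λ.deg l i : ℕ∞) + x.bdeg i) ∧
  (∀ (h1 : (0 : Fin k → ℕ) ≤ Λ.deg l) (h2 : ∀ i, ((Λ.deg l i : ℕ∞)) ≤ w.bdeg i),
    w.mor 0 (Λ.deg l) h1 h2 = l) ∧
  (∀ (p q : Fin k → ℕ) (hpq : p ≤ q)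
      (h2 : ∀ i, (((Λ.deg l + q) i : ℕ∞)) ≤ w.bdeg i)
      (h4 : ∀ i, ((q i : ℕ∞)) ≤ x.bdeg i),
    w.mor (Λ.deg l + p) (Λ.deg l + q) (add_le_add_right hpq (Λ.deg l)) h2 =
      x.mor p q hpq h4)

/-- The graph of the map `ι : Λ → Λ̃`, `ι(l) = [l x; (0, d(l))]` for any
`x ∈ s(l)Λ^{≤∞}`. -/
def IotaRel {Λ Λt : KGraph k} (D : Desourcification Λ Λt) (l : Λ.Mor) (a : Λt.Mor) :
    Prop :=
  ∃ x w : BPath Λ, x.range = Λ.src l ∧ IsExtension l x w ∧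
    a = D.eMor (pmk Λ w 0 (Λ.deg l) (fun i => Nat.zero_le _))

/-- The graph of the map `π : Λ̃ → ι(Λ)`, `π([x; (m, n)]) = [x; (m ∧ d(x), n ∧ d(x))]`. -/
def PiRel {Λ Λt : KGraph k} (D : Desourcification Λ Λt) (a b : Λt.Mor) : Prop :=
  ∃ (x : BPath Λ) (m n : Fin k → ℕ) (hmn : m ≤ n),
    a = D.eMor (pmk Λ x m n hmn) ∧
    b = D.eMor (pmk Λ x (minDeg m x.bdeg) (minDeg n x.bdeg) (minDeg_mono hmn x.bdeg))

/-- The graph of the vertex map of `π : Λ̃ → ι(Λ)`, `π([x; m]) = [x; m ∧ d(x)]`. -/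
def PiVRel {Λ Λt : KGraph k} (D : Desourcification Λ Λt) (u u' : Λt.Obj) : Prop :=
  ∃ (x : BPath Λ) (m : Fin k → ℕ),
    u = D.eObj (vmk Λ x m) ∧ u' = D.eObj (vmk Λ x (minDeg m x.bdeg))

end KGraph

/-! ### Auxiliary lemmas -/

namespace KGraph

variable {k : ℕ} {Λ : KGraph k}

lemma comp_congr {f f' g g' : Λ.Mor} (hf : f = f') (hg : g = g')
    (h : Λ.src f = Λ.rng g) (h' : Λ.src f' = Λ.rng g') :
    Λ.comp f g h = Λ.comp f' g' h' := by subst hf; subst hg; rfl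

lemma deg_zero_eq_id {f : Λ.Mor} (hf : Λ.deg f = 0) : f = Λ.id (Λ.rng f) := by
  obtain ⟨p, hp, hu⟩ := Λ.factorization f 0 0 (by simpa using hf)
  have h1 : (Λ.id (Λ.rng f), f) = p :=
    hu _ ⟨Λ.src_id _, Λ.deg_id _, hf, Λ.id_comp f⟩
  have h2 : (f, Λ.id (Λ.src f)) = p :=
    hu _ ⟨(Λ.rng_id _).symm, hf, Λ.deg_id _, Λ.comp_id f⟩
  exact (congrArg Prod.fst (h1.trans h2.symm)).symm

lemma comp_inj {f f' g g' : Λ.Mor} (h : Λ.src f = Λ.rng g) (h' : Λ.src f' = Λ.rng g')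
    (hcomp : Λ.comp f g h = Λ.comp f' g' h') (hdeg : Λ.deg f = Λ.deg f') :
    f = f' ∧ g = g' := by
  obtain ⟨p, hp, hu⟩ := Λ.factorization (Λ.comp f g h) (Λ.deg f) (Λ.deg g)
    (Λ.deg_comp f g h)
  have hdg : Λ.deg g = Λ.deg g' := by
    have h1 := Λ.deg_comp f g h
    have h2 := Λ.deg_comp f' g' h'
    rw [hcomp, h2, hdeg] at h1
    funext i
    have := congrFun h1 i
    simp only [Pi.add_apply] at this
    omega
  have e1 : (f, g) = p := hu _ ⟨h, rfl, rfl, rfl⟩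
  have e2 : (f', g') = p := hu _ ⟨h', hdeg.symm, hdg.symm, hcomp.symm⟩
  have := e1.trans e2.symm
  exact ⟨congrArg Prod.fst this, congrArg Prod.snd this⟩

/-! #### Factor extraction -/

lemma deg_eq_add_sub {f : Λ.Mor} {m : Fin k → ℕ} (hm : m ≤ Λ.deg f) :
    Λ.deg f = m + (Λ.deg f - m) := by
  funext i
  have h2 : m i ≤ Λ.deg f i := hm i
  simp only [Pi.add_apply, Pi.sub_apply]
  omega

/-- The data of the factorization of `f` at `m ≤ deg f`. -/
noncomputable def split (f : Λ.Mor) (m : Fin k → ℕ) (hm : m ≤ Λ.deg f) : Λ.Mor × Λ.Mor :=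
  (Λ.factorization f m (Λ.deg f - m) (deg_eq_add_sub hm)).choose

lemma split_spec (f : Λ.Mor) (m : Fin k → ℕ) (hm : m ≤ Λ.deg f) :
    ∃ h : Λ.src (Λ.split f m hm).1 = Λ.rng (Λ.split f m hm).2,
      Λ.deg (Λ.split f m hm).1 = m ∧ Λ.deg (Λ.split f m hm).2 = Λ.deg f - m ∧
        Λ.comp (Λ.split f m hm).1 (Λ.split f m hm).2 h = f :=
  (Λ.factorization f m (Λ.deg f - m) (deg_eq_add_sub hm)).choose_spec.1

lemma split_uniq (f : Λ.Mor) (m : Fin k → ℕ) (hm : m ≤ Λ.deg f)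
    {u v : Λ.Mor} (h : Λ.src u = Λ.rng v) (hdu : Λ.deg u = m)
    (hc : Λ.comp u v h = f) : (u, v) = Λ.split f m hm := by
  apply (Λ.factorization f m (Λ.deg f - m) (deg_eq_add_sub hm)).choose_spec.2
  refine ⟨h, hdu, ?_, hc⟩
  have hd := Λ.deg_comp u v h
  rw [hc, hdu] at hd
  funext i
  have := congrFun hd i
  simp only [Pi.add_apply, Pi.sub_apply] at this ⊢
  omega

noncomputable def fst (f : Λ.Mor) (m : Fin k → ℕ) (hm : m ≤ Λ.deg f) : Λ.Mor :=
  (Λ.split f m hm).1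

noncomputable def snd (f : Λ.Mor) (m : Fin k → ℕ) (hm : m ≤ Λ.deg f) : Λ.Mor :=
  (Λ.split f m hm).2

lemma src_fst (f : Λ.Mor) (m : Fin k → ℕ) (hm : m ≤ Λ.deg f) :
    Λ.src (Λ.fst f m hm) = Λ.rng (Λ.snd f m hm) := (Λ.split_spec f m hm).choose

lemma deg_fst (f : Λ.Mor) (m : Fin k → ℕ) (hm : m ≤ Λ.deg f) :
    Λ.deg (Λ.fst f m hm) = m := (Λ.split_spec f m hm).choose_spec.1

lemma deg_snd (f : Λ.Mor) (m : Fin k → ℕ) (hm : m ≤ Λ.deg f) :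
    Λ.deg (Λ.snd f m hm) = Λ.deg f - m := (Λ.split_spec f m hm).choose_spec.2.1

lemma comp_fst_snd (f : Λ.Mor) (m : Fin k → ℕ) (hm : m ≤ Λ.deg f) :
    Λ.comp (Λ.fst f m hm) (Λ.snd f m hm) (Λ.src_fst f m hm) = f :=
  (Λ.split_spec f m hm).choose_spec.2.2

lemma fst_eq_of (f : Λ.Mor) (m : Fin k → ℕ) (hm : m ≤ Λ.deg f)
    {u v : Λ.Mor} (h : Λ.src u = Λ.rng v) (hdu : Λ.deg u = m)
    (hc : Λ.comp u v h = f) : Λ.fst f m hm = u :=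
  (congrArg Prod.fst (Λ.split_uniq f m hm h hdu hc)).symm

lemma snd_eq_of (f : Λ.Mor) (m : Fin k → ℕ) (hm : m ≤ Λ.deg f)
    {u v : Λ.Mor} (h : Λ.src u = Λ.rng v) (hdu : Λ.deg u = m)
    (hc : Λ.comp u v h = f) : Λ.snd f m hm = v :=
  (congrArg Prod.snd (Λ.split_uniq f m hm h hdu hc)).symm

lemma rng_fst (f : Λ.Mor) (m : Fin k → ℕ) (hm : m ≤ Λ.deg f) :
    Λ.rng (Λ.fst f m hm) = Λ.rng f := by
  conv_rhs => rw [← Λ.comp_fst_snd f m hm]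
  exact (Λ.rng_comp _ _ _).symm

lemma src_snd (f : Λ.Mor) (m : Fin k → ℕ) (hm : m ≤ Λ.deg f) :
    Λ.src (Λ.snd f m hm) = Λ.src f := by
  conv_rhs => rw [← Λ.comp_fst_snd f m hm]
  exact (Λ.src_comp _ _ _).symm

lemma fst_zero (f : Λ.Mor) (h : (0:Fin k → ℕ) ≤ Λ.deg f) :
    Λ.fst f 0 h = Λ.id (Λ.rng f) :=
  Λ.fst_eq_of f 0 h (Λ.src_id _) (Λ.deg_id _) (Λ.id_comp f)

lemma snd_zero (f : Λ.Mor) (h : (0:Fin k → ℕ) ≤ Λ.deg f) :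
    Λ.snd f 0 h = f :=
  Λ.snd_eq_of f 0 h (Λ.src_id _) (Λ.deg_id _) (Λ.id_comp f)

lemma fst_deg (f : Λ.Mor) (h : Λ.deg f ≤ Λ.deg f) :
    Λ.fst f (Λ.deg f) h = f :=
  Λ.fst_eq_of f (Λ.deg f) h (Λ.rng_id _).symm rfl (Λ.comp_id f)

lemma snd_deg (f : Λ.Mor) (h : Λ.deg f ≤ Λ.deg f) :
    Λ.snd f (Λ.deg f) h = Λ.id (Λ.src f) :=
  Λ.snd_eq_of f (Λ.deg f) h (Λ.rng_id _).symm rfl (Λ.comp_id f)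

lemma fst_fst (f : Λ.Mor) (p q : Fin k → ℕ) (hpq : p ≤ q) (hq : q ≤ Λ.deg f)
    (hp : p ≤ Λ.deg (Λ.fst f q hq)) :
    Λ.fst (Λ.fst f q hq) p hp = Λ.fst f p (le_trans hpq hq) ∧
    Λ.snd f p (le_trans hpq hq) =
      Λ.comp (Λ.snd (Λ.fst f q hq) p hp) (Λ.snd f q hq)
        (by rw [Λ.src_snd]; exact Λ.src_fst f q hq) := by
  set g := Λ.fst f q hq with hg
  have h4 : Λ.src (Λ.comp (Λ.fst g p hp) (Λ.snd g p hp) (Λ.src_fst g p hp)) =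
      Λ.rng (Λ.snd f q hq) := by
    rw [Λ.src_comp, Λ.src_snd]; exact Λ.src_fst f q hq
  have e1 : Λ.comp (Λ.comp (Λ.fst g p hp) (Λ.snd g p hp) (Λ.src_fst g p hp))
      (Λ.snd f q hq) h4 = f :=
    (Λ.comp_congr (Λ.comp_fst_snd g p hp) rfl h4 (Λ.src_fst f q hq)).trans
      (Λ.comp_fst_snd f q hq)
  have key := (Λ.comp_assoc (Λ.fst g p hp) (Λ.snd g p hp) (Λ.snd f q hq)
      (Λ.src_fst g p hp) (by rw [Λ.src_snd]; exact Λ.src_fst f q hq)).symm.trans e1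
  constructor
  · exact (Λ.fst_eq_of f p (le_trans hpq hq) _ (Λ.deg_fst g p hp) key).symm
  · exact Λ.snd_eq_of f p (le_trans hpq hq) _ (Λ.deg_fst g p hp) key

lemma fst_congr {f f' : Λ.Mor} (hf : f = f') {m m' : Fin k → ℕ} (hm : m = m')
    (h : m ≤ Λ.deg f) (h' : m' ≤ Λ.deg f') : Λ.fst f m h = Λ.fst f' m' h' := by
  subst hf; subst hm; rfl

lemma snd_congr {f f' : Λ.Mor} (hf : f = f') {m m' : Fin k → ℕ} (hm : m = m')
    (h : m ≤ Λ.deg f) (h' : m' ≤ Λ.deg f') : Λ.snd f m h = Λ.snd f' m' h' := by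
  subst hf; subst hm; rfl

/-- The segment `f(p, q)` of a morphism, for `p ≤ q ≤ deg f`. -/
noncomputable def mseg (f : Λ.Mor) (p q : Fin k → ℕ) (hpq : p ≤ q) (hq : q ≤ Λ.deg f) :
    Λ.Mor :=
  Λ.snd (Λ.fst f q hq) p (by rw [Λ.deg_fst]; exact hpq)

lemma mseg_congr {f f' : Λ.Mor} (hf : f = f') {p p' q q' : Fin k → ℕ}
    (hp : p = p') (hq : q = q') (h1 : p ≤ q) (h2 : q ≤ Λ.deg f)
    (h1' : p' ≤ q') (h2' : q' ≤ Λ.deg f') :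
    Λ.mseg f p q h1 h2 = Λ.mseg f' p' q' h1' h2' := by
  subst hf; subst hp; subst hq; rfl

lemma deg_mseg (f : Λ.Mor) (p q : Fin k → ℕ) (hpq : p ≤ q) (hq : q ≤ Λ.deg f) :
    Λ.deg (Λ.mseg f p q hpq hq) = q - p := by
  unfold mseg
  rw [Λ.deg_snd, Λ.deg_fst]

lemma mseg_zero_left (f : Λ.Mor) (q : Fin k → ℕ) (h0 : (0:Fin k → ℕ) ≤ q)
    (hq : q ≤ Λ.deg f) : Λ.mseg f 0 q h0 hq = Λ.fst f q hq := Λ.snd_zero _ _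

lemma mseg_right (f : Λ.Mor) (p : Fin k → ℕ) (hp : p ≤ Λ.deg f)
    (hd : Λ.deg f ≤ Λ.deg f) : Λ.mseg f p (Λ.deg f) hp hd = Λ.snd f p hp := by
  unfold mseg
  exact Λ.snd_congr (Λ.fst_deg f hd) rfl _ _

lemma src_mseg (f : Λ.Mor) (p q : Fin k → ℕ) (hpq : p ≤ q) (hq : q ≤ Λ.deg f) :
    Λ.src (Λ.mseg f p q hpq hq) = Λ.src (Λ.fst f q hq) := Λ.src_snd _ _ _

lemma rng_mseg (f : Λ.Mor) (p q : Fin k → ℕ) (hpq : p ≤ q) (hq : q ≤ Λ.deg f) :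
    Λ.rng (Λ.mseg f p q hpq hq) = Λ.src (Λ.fst f p (hpq.trans hq)) := by
  unfold mseg
  rw [← Λ.src_fst (Λ.fst f q hq) p]
  exact congrArg Λ.src ((Λ.fst_fst f p q hpq hq _).1)

lemma mseg_self (f : Λ.Mor) (q : Fin k → ℕ) (hq : q ≤ Λ.deg f) :
    Λ.mseg f q q le_rfl hq = Λ.id (Λ.src (Λ.fst f q hq)) := by
  unfold mseg
  have h := (Λ.deg_fst f q hq).symm
  exact (Λ.snd_congr rfl h _ le_rfl).trans (Λ.snd_deg _ _)

lemma comp_mseg (f : Λ.Mor) (p q r : Fin k → ℕ) (hpq : p ≤ q) (hqr : q ≤ r)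
    (hr : r ≤ Λ.deg f)
    (h : Λ.src (Λ.mseg f p q hpq (hqr.trans hr)) = Λ.rng (Λ.mseg f q r hqr hr)) :
    Λ.comp (Λ.mseg f p q hpq (hqr.trans hr)) (Λ.mseg f q r hqr hr) h =
      Λ.mseg f p r (hpq.trans hqr) hr := by
  set g := Λ.fst f r hr with hg
  have hqg : q ≤ Λ.deg g := by rw [hg, Λ.deg_fst]; exact hqr
  have e0 : Λ.fst g q hqg = Λ.fst f q (hqr.trans hr) := (Λ.fst_fst f q r hqr hr hqg).1
  have hpg : p ≤ Λ.deg (Λ.fst g q hqg) := by rw [Λ.deg_fst]; exact hpq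
  have e1 := (Λ.fst_fst g p q hpq hqg hpg).2
  have e2 : Λ.snd (Λ.fst g q hqg) p hpg = Λ.mseg f p q hpq (hqr.trans hr) :=
    Λ.snd_congr e0 rfl _ _
  refine Eq.trans ?_ e1.symm
  exact Λ.comp_congr e2.symm rfl _ _

lemma src_mseg_rng (f : Λ.Mor) (p q : Fin k → ℕ) (hpq : p ≤ q) (hq : q ≤ Λ.deg f) :
    Λ.src (Λ.mseg f p q hpq hq) = Λ.rng (Λ.mseg f q q le_rfl hq) := by
  rw [Λ.src_mseg, Λ.rng_mseg]

lemma mseg_comp_left {g h : Λ.Mor} (hgh : Λ.src g = Λ.rng h) (p q : Fin k → ℕ)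
    (hpq : p ≤ q) (hq : q ≤ Λ.deg g)
    (hq' : q ≤ Λ.deg (Λ.comp g h hgh)) :
    Λ.mseg (Λ.comp g h hgh) p q hpq hq' = Λ.mseg g p q hpq hq := by
  have hfst : Λ.fst (Λ.comp g h hgh) q hq' = Λ.fst g q hq := by
    have h4 : Λ.src (Λ.comp (Λ.fst g q hq) (Λ.snd g q hq) (Λ.src_fst g q hq)) =
        Λ.rng h := by rw [Λ.src_comp, Λ.src_snd]; exact hgh
    have e1 : Λ.comp (Λ.comp (Λ.fst g q hq) (Λ.snd g q hq) (Λ.src_fst g q hq)) h h4 =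
        Λ.comp g h hgh := Λ.comp_congr (Λ.comp_fst_snd g q hq) rfl h4 hgh
    have key := (Λ.comp_assoc (Λ.fst g q hq) (Λ.snd g q hq) h
        (Λ.src_fst g q hq) (by rw [Λ.src_snd]; exact hgh)).symm.trans e1
    exact Λ.fst_eq_of _ q hq' _ (Λ.deg_fst g q hq) key
  unfold mseg
  exact Λ.snd_congr hfst rfl _ _

/-! #### `minDeg` arithmetic -/

lemma coe_minDeg (m : Fin k → ℕ) (d : Fin k → ℕ∞) (i : Fin k) :
    ((minDeg m d i : ℕ∞)) = min ((m i : ℕ∞)) (d i) := ENat.coe_toNat (minDeg_ne_top m d i)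

lemma minDeg_top {m : Fin k → ℕ} {d : Fin k → ℕ∞} {i : Fin k} (h : d i = ⊤) :
    minDeg m d i = m i := by
  simp [minDeg, h]

lemma minDeg_coe {m : Fin k → ℕ} {d : Fin k → ℕ∞} {i : Fin k} {D : ℕ} (h : d i = D) :
    minDeg m d i = min (m i) D := by
  rcases le_total (m i) D with h' | h'
  · rw [minDeg, h, min_eq_left (by exact_mod_cast h'), ENat.toNat_coe, min_eq_left h']
  · rw [minDeg, h, min_eq_right (by exact_mod_cast h'), ENat.toNat_coe, min_eq_right h']

lemma minDeg_le (m : Fin k → ℕ) (d : Fin k → ℕ∞) (i : Fin k) :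
    minDeg m d i ≤ m i := by
  cases h : d i with
  | top => rw [minDeg_top h]
  | coe D => rw [minDeg_coe h]; exact min_le_left _ _

lemma minDeg_zero (d : Fin k → ℕ∞) : minDeg 0 d = 0 := by
  funext i
  have := minDeg_le 0 d i
  simpa using this

lemma minDeg_eq_of_le {m : Fin k → ℕ} {d : Fin k → ℕ∞}
    (h : ∀ i, (m i : ℕ∞) ≤ d i) : minDeg m d = m := by
  funext i
  simp [minDeg, min_eq_left (h i)]

lemma le_of_minDeg_eq {m : Fin k → ℕ} {d : Fin k → ℕ∞} {i : Fin k}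
    (h : minDeg m d i = m i) : (m i : ℕ∞) ≤ d i := by
  cases hd : d i with
  | top => exact le_top
  | coe D =>
    rw [minDeg_coe hd] at h
    exact_mod_cast Nat.cast_le.mpr (by omega)

namespace BPath

variable {Λ : KGraph k}

lemma mor_congr (x : BPath Λ) {p p' q q' : Fin k → ℕ} (hp : p = p') (hq : q = q')
    (h1 : p ≤ q) (h2 : ∀ i, ((q i : ℕ∞)) ≤ x.bdeg i)
    (h1' : p' ≤ q') (h2' : ∀ i, ((q' i : ℕ∞)) ≤ x.bdeg i) :
    x.mor p q h1 h2 = x.mor p' q' h1' h2' := by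
  subst hp; subst hq; rfl

lemma vtx_congr (x : BPath Λ) {m m' : Fin k → ℕ}
    (h : minDeg m x.bdeg = minDeg m' x.bdeg) : x.vtx m = x.vtx m' :=
  congrArg Λ.rng (x.mor_congr h h _ _ _ _)

lemma range_eq (x : BPath Λ) (h0 : ∀ i, (((0:Fin k → ℕ) i : ℕ∞)) ≤ x.bdeg i) :
    x.range = Λ.rng (x.mor 0 0 le_rfl h0) := by
  unfold range vtx
  exact congrArg Λ.rng (x.mor_congr (minDeg_zero _) (minDeg_zero _) _ _ _ _)

lemma vtx_eq_rng_mor (x : BPath Λ) (m : Fin k → ℕ)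
    (hm : ∀ i, ((m i : ℕ∞)) ≤ x.bdeg i) : x.vtx m = Λ.rng (x.mor m m le_rfl hm) := by
  unfold vtx
  exact congrArg Λ.rng (x.mor_congr (minDeg_eq_of_le hm) (minDeg_eq_of_le hm) _ _ _ _)

/-- A boundary path has an edge of each degree `eᵢ` in a direction where it has
not yet terminated. -/
lemma exists_unit_edge (x : BPath Λ) (i : Fin k) (h : x.bdeg i ≠ 0)
    (h0 : ∀ j, (((0:Fin k → ℕ) j : ℕ∞)) ≤ x.bdeg j) :
    ∃ g : Λ.Mor, Λ.rng g = Λ.rng (x.mor 0 0 le_rfl h0) ∧ Λ.deg g = unitVec i := by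
  have hle : ∀ j, ((unitVec i j : ℕ∞)) ≤ x.bdeg j := by
    intro j
    by_cases hji : j = i
    · subst hji
      simp only [unitVec, if_pos rfl, Nat.cast_one]
      exact ENat.one_le_iff_ne_zero.mpr h
    · simp [unitVec, hji]
  refine ⟨x.mor 0 (unitVec i) (fun j => Nat.zero_le _) hle, ?_, ?_⟩
  · exact x.rng_mor 0 (unitVec i) _ hle h0
  · rw [x.deg_mor]
    funext j
    simp

end BPath

/-- If `rng f` supports a morphism of positive degree in direction `i`, it supports
an edge of degree `eᵢ`. -/
lemma exists_unit_edge_of_deg_pos {f : Λ.Mor} (i : Fin k) (h : 1 ≤ Λ.deg f i) :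
    ∃ g : Λ.Mor, Λ.rng g = Λ.rng f ∧ Λ.deg g = unitVec i := by
  have hle : unitVec i ≤ Λ.deg f := by
    intro j
    by_cases hji : j = i
    · subst hji; simpa [unitVec] using h
    · simp [unitVec, hji]
  exact ⟨Λ.fst f (unitVec i) hle, Λ.rng_fst f _ hle, Λ.deg_fst f _ hle⟩

/-- Backward propagation of the absence of `eᵢ`-edges along paths of `i`-degree zero
(uses local convexity). -/
lemma no_unit_edge_rng (hlc : Λ.LocallyConvex) (f : Λ.Mor) (i : Fin k)
    (hdi : Λ.deg f i = 0)
    (hsrc : ¬∃ g : Λ.Mor, Λ.rng g = Λ.src f ∧ Λ.deg g = unitVec i) :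
    ¬∃ g : Λ.Mor, Λ.rng g = Λ.rng f ∧ Λ.deg g = unitVec i := by
  generalize hN : (Finset.univ.sum (Λ.deg f)) = N
  induction N using Nat.strong_induction_on generalizing f with
  | _ N ih =>
  by_cases hz : Λ.deg f = 0
  · have hf := Λ.deg_zero_eq_id hz
    have : Λ.src f = Λ.rng f := by conv_lhs => rw [hf, Λ.src_id]
    rwa [this] at hsrc
  · have : ∃ j, 1 ≤ Λ.deg f j := by
      by_contra hc
      push_neg at hc
      exact hz (funext fun j => by have := hc j; simp only [Pi.zero_apply]; omega)
    obtain ⟨j, hj⟩ := this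
    have hij : i ≠ j := fun hij => by subst hij; omega
    have hle : unitVec j ≤ Λ.deg f := by
      intro l
      by_cases hlj : l = j
      · subst hlj; simpa [unitVec] using hj
      · simp [unitVec, hlj]
    set α := Λ.fst f (unitVec j) hle with hα
    set β := Λ.snd f (unitVec j) hle with hβ
    have hdegβ : Λ.deg β = Λ.deg f - unitVec j := Λ.deg_snd f _ hle
    have hdegβi : Λ.deg β i = 0 := by
      rw [hdegβ]; simp only [Pi.sub_apply]; omega
    have hsumβ : Finset.univ.sum (Λ.deg β) < N := by
      rw [← hN, hdegβ]
      apply Finset.sum_lt_sum (fun l _ => by simp only [Pi.sub_apply]; omega)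
      refine ⟨j, Finset.mem_univ j, ?_⟩
      have h1 : unitVec j j = 1 := by simp [unitVec]
      simp only [Pi.sub_apply, h1]
      omega
    have hsrcβ : Λ.src β = Λ.src f := Λ.src_snd f _ hle
    have hβno : ¬∃ g : Λ.Mor, Λ.rng g = Λ.rng β ∧ Λ.deg g = unitVec i := by
      exact ih _ hsumβ β hdegβi (by rwa [hsrcβ]) rfl
    -- now the single edge α
    rintro ⟨e, he, hde⟩
    have hrngα : Λ.rng α = Λ.rng f := Λ.rng_fst f _ hle
    have hdα : Λ.deg α = unitVec j := Λ.deg_fst f _ hle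
    obtain ⟨-, g', hg'1, hg'2⟩ := hlc (Λ.rng f) i j hij e α he hde hrngα hdα
    exact hβno ⟨g', hg'1.trans (Λ.src_fst f (unitVec j) hle), hg'2⟩

/-- Every vertex admits an element of `vΛ^{≤(1,…,1)}`. -/
lemma exists_le_one (v : Λ.Obj) :
    ∃ f : Λ.Mor, Λ.rng f = v ∧ f ∈ Λ.LeSet (fun _ => 1) := by
  classical
  set S : Set (Fin k → ℕ) :=
    {d | (∃ f : Λ.Mor, Λ.rng f = v ∧ Λ.deg f = d) ∧ d ≤ (fun _ => 1)} with hS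
  have hfin : S.Finite := by
    apply Set.Finite.subset (Set.Finite.pi (fun i : Fin k => Set.finite_Iic 1))
    intro d hd
    intro i _
    exact Set.mem_Iic.mpr (hd.2 i)
  have hne : S.Nonempty := ⟨0, ⟨Λ.id v, Λ.rng_id v, Λ.deg_id v⟩, fun i => by simp⟩
  obtain ⟨d, hdS, hdmax0⟩ := Set.Finite.exists_maximal hfin hne
  have hdmax : ∀ d' ∈ S, d ≤ d' → d = d' := fun d' hd' hle => le_antisymm hle (hdmax0 hd' hle)
  obtain ⟨⟨f, hfr, hfd⟩, hdle⟩ := hdS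
  refine ⟨f, hfr, ?_, ?_⟩
  · rw [hfd]; exact hdle
  · intro i hi hex
    obtain ⟨g, hgr, hgd⟩ := hex
    have hcomp : Λ.src f = Λ.rng g := hgr.symm
    have hmem : d + unitVec i ∈ S := by
      refine ⟨⟨Λ.comp f g hcomp, by rw [Λ.rng_comp]; exact hfr, by rw [Λ.deg_comp, hfd, hgd]⟩, ?_⟩
      intro j
      have hij := hi j
      simp only [Pi.add_apply] at hij ⊢
      rw [hfd] at hij
      omega
    have hmax := hdmax _ hmem (by intro j; simp only [Pi.add_apply]; omega)
    have h2 := congrFun hmax i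
    have h1 : unitVec i i = 1 := by simp [unitVec]
    simp only [Pi.add_apply, h1] at h2
    omega

/-! #### Construction of a boundary path at every vertex -/

variable (Λ)

/-- A choice of element of `uΛ^{≤(1,…,1)}`. -/
noncomputable def gstep (u : Λ.Obj) : Λ.Mor := (Λ.exists_le_one u).choose

lemma gstep_rng (u : Λ.Obj) : Λ.rng (Λ.gstep u) = u := (Λ.exists_le_one u).choose_spec.1

lemma gstep_mem (u : Λ.Obj) : Λ.gstep u ∈ Λ.LeSet (fun _ => 1) :=
  (Λ.exists_le_one u).choose_spec.2

/-- The sequence of partial products defining a boundary path based at `v`. -/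
noncomputable def bp (v : Λ.Obj) : ℕ → {f : Λ.Mor // Λ.rng f = v}
  | 0 => ⟨Λ.id v, Λ.rng_id v⟩
  | (j+1) =>
    ⟨Λ.comp (bp v j).1 (Λ.gstep (Λ.src (bp v j).1)) (Λ.gstep_rng _).symm,
      by rw [Λ.rng_comp]; exact (bp v j).2⟩

/-- The partial products. -/
noncomputable def lam (v : Λ.Obj) (j : ℕ) : Λ.Mor := (Λ.bp v j).1

/-- The partial degrees. -/
noncomputable abbrev pS (v : Λ.Obj) (j : ℕ) : Fin k → ℕ := Λ.deg (Λ.lam v j)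

lemma lam_zero (v : Λ.Obj) : Λ.lam v 0 = Λ.id v := rfl

lemma lam_succ (v : Λ.Obj) (j : ℕ) :
    Λ.lam v (j+1) = Λ.comp (Λ.lam v j) (Λ.gstep (Λ.src (Λ.lam v j)))
      (Λ.gstep_rng _).symm := by
  simp only [lam, bp]

lemma pS_succ (v : Λ.Obj) (j : ℕ) :
    Λ.pS v (j+1) = Λ.pS v j + Λ.deg (Λ.gstep (Λ.src (Λ.lam v j))) := Λ.deg_comp _ _ _

lemma pS_mono (v : Λ.Obj) {j j' : ℕ} (h : j ≤ j') : Λ.pS v j ≤ Λ.pS v j' := by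
  induction h with
  | refl => exact le_rfl
  | @step n hn ih =>
    intro i
    have h2 := congrFun (Λ.pS_succ v n) i
    simp only [Pi.add_apply] at h2
    have h3 : Λ.pS v j i ≤ Λ.pS v n i := ih i
    show Λ.pS v j i ≤ Λ.pS v (n+1) i
    omega

lemma mseg_lam_add (v : Λ.Obj) (j t : ℕ) (p q : Fin k → ℕ)
    (hpq : p ≤ q) (hq : q ≤ Λ.pS v j) (hq' : q ≤ Λ.pS v (j+t)) :
    Λ.mseg (Λ.lam v (j+t)) p q hpq hq' = Λ.mseg (Λ.lam v j) p q hpq hq := by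
  induction t with
  | zero => exact Λ.mseg_congr rfl rfl rfl _ _ _ _
  | succ n ihn =>
    have hqn : q ≤ Λ.pS v (j+n) := hq.trans (Λ.pS_mono v (Nat.le_add_right j n))
    have hqd : q ≤ Λ.deg (Λ.comp (Λ.lam v (j+n)) (Λ.gstep (Λ.src (Λ.lam v (j+n))))
        (Λ.gstep_rng _).symm) := by
      rw [← Λ.lam_succ]
      exact hq'
    have e0 : Λ.mseg (Λ.lam v (j+n+1)) p q hpq hq' =
        Λ.mseg (Λ.comp (Λ.lam v (j+n)) (Λ.gstep (Λ.src (Λ.lam v (j+n))))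
          (Λ.gstep_rng _).symm) p q hpq hqd :=
      Λ.mseg_congr (Λ.lam_succ v (j+n)) rfl rfl _ _ _ _
    have e1 := Λ.mseg_comp_left (g := Λ.lam v (j+n))
      (h := Λ.gstep (Λ.src (Λ.lam v (j+n)))) (Λ.gstep_rng _).symm p q hpq hqn hqd
    exact (e0.trans e1).trans (ihn hqn)

lemma mseg_lam_stable (v : Λ.Obj) {j j' : ℕ} (h : j ≤ j') (p q : Fin k → ℕ)
    (hpq : p ≤ q) (hq : q ≤ Λ.pS v j) (hq' : q ≤ Λ.pS v j') :
    Λ.mseg (Λ.lam v j') p q hpq hq' = Λ.mseg (Λ.lam v j) p q hpq hq := by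
  obtain ⟨t, rfl⟩ : ∃ t, j' = j + t := ⟨j' - j, by omega⟩
  exact Λ.mseg_lam_add v j t p q hpq hq hq'

lemma mseg_lam_indep (v : Λ.Obj) (j j' : ℕ) (p q : Fin k → ℕ)
    (hpq : p ≤ q) (hq : q ≤ Λ.pS v j) (hq' : q ≤ Λ.pS v j') :
    Λ.mseg (Λ.lam v j) p q hpq hq = Λ.mseg (Λ.lam v j') p q hpq hq' := by
  have h1 := Λ.mseg_lam_stable v (Nat.le_max_left j j') p q hpq hq
    (hq.trans (Λ.pS_mono v (Nat.le_max_left j j')))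
  have h2 := Λ.mseg_lam_stable v (Nat.le_max_right j j') p q hpq hq'
    (hq'.trans (Λ.pS_mono v (Nat.le_max_right j j')))
  exact h1.symm.trans h2

lemma exists_le_pS (v : Λ.Obj) (q : Fin k → ℕ)
    (hq : ∀ i, ((q i : ℕ∞)) ≤ ⨆ j, ((Λ.pS v j i : ℕ∞))) : ∃ j, q ≤ Λ.pS v j := by
  have h1 : ∀ i, ∃ j, q i ≤ Λ.pS v j i := by
    intro i
    by_contra hc
    push_neg at hc
    have h2 : (⨆ j, ((Λ.pS v j i : ℕ∞))) ≤ ((q i - 1 : ℕ) : ℕ∞) := by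
      apply iSup_le
      intro j
      exact_mod_cast Nat.le_sub_one_of_lt (hc j)
    have h3 := (hq i).trans h2
    have h4 : q i ≤ q i - 1 := by exact_mod_cast h3
    have h5 : 1 ≤ q i := (hc 0).trans_le' (by omega)
    omega
  choose J hJ using h1
  refine ⟨Finset.univ.sup J, fun i => ?_⟩
  exact (hJ i).trans (Λ.pS_mono v (Finset.le_sup (Finset.mem_univ i)) i)

/-- Index at which the partial products dominate `q`. -/
noncomputable def bN (v : Λ.Obj) (q : Fin k → ℕ) : ℕ :=
  if h : ∃ j, q ≤ Λ.pS v j then h.choose else 0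

lemma bN_spec (v : Λ.Obj) (q : Fin k → ℕ)
    (hq : ∀ i, ((q i : ℕ∞)) ≤ ⨆ j, ((Λ.pS v j i : ℕ∞))) : q ≤ Λ.pS v (Λ.bN v q) := by
  have h := Λ.exists_le_pS v q hq
  rw [bN, dif_pos h]
  exact h.choose_spec

/-- A boundary path based at `v`, for `Λ` locally convex. -/
noncomputable def boundaryPath (hlc : Λ.LocallyConvex) (v : Λ.Obj) : BPath Λ where
  bdeg i := ⨆ j, ((Λ.pS v j i : ℕ∞))
  mor p q hpq hq := Λ.mseg (Λ.lam v (Λ.bN v q)) p q hpq (Λ.bN_spec v q hq)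
  deg_mor p q hpq hq := Λ.deg_mseg _ p q hpq _
  mor_self p hp := by rw [Λ.mseg_self, Λ.rng_id]
  src_mor p q hpq hq := Λ.src_mseg_rng _ p q hpq _
  rng_mor p q hpq hq hp := by
    rw [Λ.rng_mseg, Λ.rng_mseg]
    have e1 : Λ.fst (Λ.lam v (Λ.bN v q)) p (hpq.trans (Λ.bN_spec v q hq)) =
        Λ.fst (Λ.lam v (Λ.bN v p)) p (Λ.bN_spec v p hp) := by
      have h1 := (Λ.mseg_zero_left (Λ.lam v (Λ.bN v q)) p (fun i => Nat.zero_le _)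
        (hpq.trans (Λ.bN_spec v q hq))).symm
      have h2 := Λ.mseg_lam_indep v (Λ.bN v q) (Λ.bN v p) 0 p (fun i => Nat.zero_le _)
        (hpq.trans (Λ.bN_spec v q hq)) (Λ.bN_spec v p hp)
      exact h1.trans (h2.trans (Λ.mseg_zero_left _ p _ _))
    rw [e1]
  comp_mor p q r hpq hqr hr hq := by
    have e1 : Λ.mseg (Λ.lam v (Λ.bN v q)) p q hpq (Λ.bN_spec v q hq) =
        Λ.mseg (Λ.lam v (Λ.bN v r)) p q hpq (hqr.trans (Λ.bN_spec v r hr)) :=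
      Λ.mseg_lam_indep v _ _ p q hpq _ _
    refine Eq.trans (Λ.comp_congr e1 rfl _ ?_) (Λ.comp_mseg _ p q r hpq hqr _ _)
    rw [Λ.src_mseg, Λ.rng_mseg]
  boundary p hp i hpi := by
    set J := Λ.bN v p with hJ
    have hple : p ≤ Λ.pS v J := Λ.bN_spec v p hp
    have hpi' : ((p i : ℕ∞)) = ⨆ j, ((Λ.pS v j i : ℕ∞)) := hpi
    have hSub : ∀ j, Λ.pS v j i ≤ p i := by
      intro j
      have h1 : ((Λ.pS v j i : ℕ∞)) ≤ ⨆ j', ((Λ.pS v j' i : ℕ∞)) :=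
        le_iSup (fun j' => ((Λ.pS v j' i : ℕ∞))) j
      rw [← hpi'] at h1
      exact_mod_cast h1
    have hSJ : Λ.pS v J i = p i := le_antisymm (hSub J) (hple i)
    have hg0 : Λ.deg (Λ.gstep (Λ.src (Λ.lam v J))) i = 0 := by
      have h1 := congrFun (Λ.pS_succ v J) i
      have h2 := hSub (J+1)
      simp only [Pi.add_apply] at h1
      omega
    have hnosrc : ¬∃ g : Λ.Mor, Λ.rng g = Λ.src (Λ.lam v (J+1)) ∧ Λ.deg g = unitVec i := by
      have hmem := Λ.gstep_mem (Λ.src (Λ.lam v J))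
      have h2 := hmem.2 i (by
        intro l
        show (Λ.deg (Λ.gstep (Λ.src (Λ.lam v J))) + unitVec i) l ≤ 1
        by_cases hli : l = i
        · subst hli
          have hu : unitVec l l = 1 := by simp [unitVec]
          simp only [Pi.add_apply, hu, hg0]
          omega
        · have hu : unitVec i l = 0 := by simp [unitVec, hli]
          have h5 : Λ.deg (Λ.gstep (Λ.src (Λ.lam v J))) l ≤ 1 := hmem.1 l
          simp only [Pi.add_apply, hu]
          omega)
      have hsrcs : Λ.src (Λ.lam v (J+1)) = Λ.src (Λ.gstep (Λ.src (Λ.lam v J))) := by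
        rw [Λ.lam_succ, Λ.src_comp]
      rw [hsrcs]
      exact h2
    have hpJ1 : p ≤ Λ.pS v (J+1) := hple.trans (Λ.pS_mono v (Nat.le_succ J))
    set ν := Λ.mseg (Λ.lam v (J+1)) p (Λ.pS v (J+1)) hpJ1 le_rfl with hν
    have hdν : Λ.deg ν i = 0 := by
      rw [hν, Λ.deg_mseg]
      simp only [Pi.sub_apply]
      have := hSub (J+1)
      omega
    have hνsnd : ν = Λ.snd (Λ.lam v (J+1)) p hpJ1 := by
      rw [hν]
      exact (Λ.mseg_congr rfl rfl
        (show Λ.pS v (J+1) = Λ.deg (Λ.lam v (J+1)) from rfl) _ _ _ _).trans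
        (Λ.mseg_right _ p hpJ1 le_rfl)
    have hsν : Λ.src ν = Λ.src (Λ.lam v (J+1)) := by
      rw [hνsnd]
      exact Λ.src_snd _ _ _
    have hrν : Λ.rng ν = Λ.rng (Λ.mseg (Λ.lam v J) p p le_rfl hple) := by
      rw [hν, Λ.rng_mseg, Λ.rng_mseg]
      have h1 := (Λ.mseg_zero_left (Λ.lam v (J+1)) p (fun _ => Nat.zero_le _) hpJ1).symm
      have h2 := Λ.mseg_lam_indep v (J+1) J 0 p (fun _ => Nat.zero_le _) hpJ1 hple
      exact congrArg Λ.src (h1.trans (h2.trans (Λ.mseg_zero_left _ p _ _)))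
    have := Λ.no_unit_edge_rng hlc ν i hdν (by rw [hsν]; exact hnosrc)
    rw [hrν] at this
    have e2 : Λ.mseg (Λ.lam v J) p p le_rfl hple =
        Λ.mseg (Λ.lam v (Λ.bN v p)) p p le_rfl (Λ.bN_spec v p hp) :=
      Λ.mseg_lam_indep v _ _ p p le_rfl _ _
    rw [e2] at this
    exact this

lemma boundaryPath_range (hlc : Λ.LocallyConvex) (v : Λ.Obj) :
    (Λ.boundaryPath hlc v).range = v := by
  have h0 : ∀ i, ((((0:Fin k → ℕ)) i : ℕ∞)) ≤ (Λ.boundaryPath hlc v).bdeg i := by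
    intro i
    simp only [Pi.zero_apply, Nat.cast_zero]
    exact zero_le
  rw [BPath.range_eq _ h0]
  have hq0 : (0:Fin k → ℕ) ≤ Λ.pS v 0 := fun i => Nat.zero_le _
  have e1 : (Λ.boundaryPath hlc v).mor 0 0 le_rfl h0 =
      Λ.mseg (Λ.lam v 0) 0 0 le_rfl hq0 := Λ.mseg_lam_indep v _ _ 0 0 le_rfl _ _
  rw [e1, Λ.rng_mseg, Λ.fst_zero, Λ.src_id]
  exact (Λ.bp v 0).2

/-! #### Desourcification lemmas -/

variable {Λ}

lemma pmk_congr (x : BPath Λ) {m m' n n' : Fin k → ℕ} (hm : m = m') (hn : n = n')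
    (h : m ≤ n) (h' : m' ≤ n') : pmk Λ x m n h = pmk Λ x m' n' h' := by
  subst hm; subst hn; rfl

lemma pmk_sound {x y : BPath Λ} {m n p q : Fin k → ℕ} {hmn : m ≤ n} {hpq : p ≤ q}
    (h : pkey Λ ⟨(x, (m, n)), hmn⟩ = pkey Λ ⟨(y, (p, q)), hpq⟩) :
    pmk Λ x m n hmn = pmk Λ y p q hpq := Quotient.sound h

lemma pmk_exact {x y : BPath Λ} {m n p q : Fin k → ℕ} {hmn : m ≤ n} {hpq : p ≤ q}
    (h : pmk Λ x m n hmn = pmk Λ y p q hpq) :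
    pkey Λ ⟨(x, (m, n)), hmn⟩ = pkey Λ ⟨(y, (p, q)), hpq⟩ := Quotient.exact h

lemma vmk_sound {x y : BPath Λ} {m n : Fin k → ℕ}
    (h : vkey Λ (x, m) = vkey Λ (y, n)) : vmk Λ x m = vmk Λ y n := Quotient.sound h

lemma vmk_exact {x y : BPath Λ} {m n : Fin k → ℕ}
    (h : vmk Λ x m = vmk Λ y n) : vkey Λ (x, m) = vkey Λ (y, n) := Quotient.exact h

variable {Λt : KGraph k}

lemma gluing_self (x : BPath Λ) (n : Fin k → ℕ) :
    IsGluing x (minDeg n x.bdeg) x (minDeg n x.bdeg) x :=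
  ⟨fun i => (add_tsub_cancel_of_le (minDeg_le_deg n x.bdeg i)).symm,
    fun _ _ _ => rfl, fun _ _ _ _ _ => rfl⟩

lemma comp_pmk (D : Desourcification Λ Λt) (x : BPath Λ) (m n r : Fin k → ℕ)
    (hmn : m ≤ n) (hnr : n ≤ r)
    (h : Λt.src (D.eMor (pmk Λ x m n hmn)) = Λt.rng (D.eMor (pmk Λ x n r hnr))) :
    Λt.comp (D.eMor (pmk Λ x m n hmn)) (D.eMor (pmk Λ x n r hnr)) h =
      D.eMor (pmk Λ x m r (hmn.trans hnr)) := by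
  rw [D.comp_eq x m n hmn x n r hnr h x (gluing_self x n)]
  refine congrArg D.eMor (pmk_congr x rfl ?_ _ _)
  funext i
  have h5 : n i ≤ r i := hnr i
  simp only [Pi.add_apply, Pi.sub_apply]
  omega

lemma src_eq_rng_pmk (D : Desourcification Λ Λt) (x : BPath Λ) (m n r : Fin k → ℕ)
    (hmn : m ≤ n) (hnr : n ≤ r) :
    Λt.src (D.eMor (pmk Λ x m n hmn)) = Λt.rng (D.eMor (pmk Λ x n r hnr)) := by
  rw [D.src_eq, D.rng_eq]

lemma desource_noSources (D : Desourcification Λ Λt) : Λt.NoSources := by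
  intro u t
  obtain ⟨a, ha⟩ := Quotient.exists_rep (D.eObj.symm u)
  obtain ⟨x, m⟩ := a
  refine ⟨D.eMor (pmk Λ x m (m + t) le_self_add), ?_, ?_⟩
  · rw [D.rng_eq]
    show D.eObj (vmk Λ x m) = u
    have : vmk Λ x m = D.eObj.symm u := ha
    rw [this]
    exact D.eObj.apply_symm_apply u
  · rw [D.deg_eq]
    funext i
    simp only [Pi.sub_apply, Pi.add_apply]
    omega

lemma bdeg_top_of_noSources (hns : Λt.NoSources) (xt : BPath Λt) (i : Fin k) :
    xt.bdeg i = ⊤ := by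
  by_contra hne
  obtain ⟨Dn, hD⟩ := WithTop.ne_top_iff_exists.mp hne
  set p : Fin k → ℕ := fun j => if j = i then Dn else 0 with hpdef
  have hp : ∀ j, ((p j : ℕ∞)) ≤ xt.bdeg j := by
    intro j
    by_cases hji : j = i
    · subst hji; simp only [hpdef, if_pos rfl]; exact le_of_eq hD
    · simp only [hpdef, if_neg hji, Nat.cast_zero]; exact zero_le
  have hpi : ((p i : ℕ∞)) = xt.bdeg i := by
    simp only [hpdef, if_pos rfl]; exact hD
  have hb := xt.boundary p hp i hpi
  obtain ⟨g, hg1, hg2⟩ := hns (Λt.rng (xt.mor p p le_rfl hp)) (unitVec i)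
  exact hb ⟨g, hg1, hg2⟩

/-- The canonical lift of a (shifted) boundary path of `Λ` to an infinite path
of `Λ̃`. -/
noncomputable def liftPath (D : Desourcification Λ Λt) (x : BPath Λ) (c : Fin k → ℕ) :
    BPath Λt where
  bdeg _ := ⊤
  mor p q hpq _ := D.eMor (pmk Λ x (c+p) (c+q) (add_le_add_right hpq c))
  deg_mor p q hpq hq := by
    rw [D.deg_eq]
    funext i
    simp only [Pi.sub_apply, Pi.add_apply]
    omega
  mor_self p hp := by rw [D.rng_eq, D.id_eq]
  src_mor p q hpq hq := by rw [D.src_eq, D.rng_eq]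
  rng_mor p q hpq hq hp := by rw [D.rng_eq, D.rng_eq]
  comp_mor p q r hpq hqr hr hq := by
    rw [comp_pmk D x (c+p) (c+q) (c+r) (add_le_add_right hpq c) (add_le_add_right hqr c)]
  boundary p hp i hpi := absurd hpi (ENat.coe_ne_top _)

lemma liftPath_bdeg (D : Desourcification Λ Λt) (x : BPath Λ) (c : Fin k → ℕ)
    (i : Fin k) : (liftPath D x c).bdeg i = ⊤ := rfl

/-- Extraction of a representing boundary path for an initial block of an infinite
path of `Λ̃`. -/
lemma extract (D : Desourcification Λ Λt) (xt : BPath Λt)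
    (htop : ∀ i, xt.bdeg i = ⊤) (r : Fin k → ℕ) :
    ∃ (w : BPath Λ) (a : Fin k → ℕ),
      ∀ (p q : Fin k → ℕ) (hpq : p ≤ q) (_ : q ≤ r)
        (h2 : ∀ i, ((q i : ℕ∞)) ≤ xt.bdeg i),
        xt.mor p q hpq h2 = D.eMor (pmk Λ w (a+p) (a+q) (add_le_add_right hpq a)) := by
  have htop' : ∀ (q : Fin k → ℕ) (i : Fin k), ((q i : ℕ∞)) ≤ xt.bdeg i := by
    intro q i; rw [htop i]; exact le_top
  have h0r : (0:Fin k → ℕ) ≤ r := fun i => Nat.zero_le _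
  obtain ⟨⟨⟨w, m0, n0⟩, hmn0⟩, ht⟩ :=
    Quotient.exists_rep (D.eMor.symm (xt.mor 0 r h0r (htop' r)))
  have hP : D.eMor (pmk Λ w m0 n0 hmn0) = xt.mor 0 r h0r (htop' r) := by
    have : pmk Λ w m0 n0 hmn0 = D.eMor.symm (xt.mor 0 r h0r (htop' r)) := ht
    rw [this]
    exact D.eMor.apply_symm_apply _
  have hn0 : n0 = m0 + r := by
    have h1 : Λt.deg (xt.mor 0 r h0r (htop' r)) = r - 0 := xt.deg_mor 0 r h0r (htop' r)
    rw [← hP, D.deg_eq] at h1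
    funext i
    have h2 := congrFun h1 i
    have h3 : m0 i ≤ n0 i := hmn0 i
    simp only [Pi.sub_apply, Pi.add_apply, Pi.zero_apply] at h2 ⊢
    omega
  refine ⟨w, m0, ?_⟩
  intro p q hpq hqr h2
  have h0q : (0:Fin k → ℕ) ≤ q := fun i => Nat.zero_le _
  have h0p : (0:Fin k → ℕ) ≤ p := fun i => Nat.zero_le _
  have hle1 : m0 ≤ m0 + q := fun i => Nat.le_add_right _ _
  have hle1p : m0 ≤ m0 + p := fun i => Nat.le_add_right _ _
  have hle2 : m0 + q ≤ m0 + r := add_le_add_right hqr m0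
  have hle2p : m0 + p ≤ m0 + q := add_le_add_right hpq m0
  have hsplit1 := xt.comp_mor 0 q r h0q hqr (htop' r) (htop' q)
  have hcp1 := comp_pmk D w m0 (m0+q) (m0+r) hle1 hle2
    (src_eq_rng_pmk D w m0 (m0+q) (m0+r) hle1 hle2)
  have hpmk_r : D.eMor (pmk Λ w m0 (m0+r) (hle1.trans hle2)) =
      xt.mor 0 r h0r (htop' r) := by
    rw [← hP]
    exact congrArg D.eMor (pmk_congr w rfl hn0.symm _ _)
  have hcc : Λt.comp (xt.mor 0 q h0q (htop' q)) (xt.mor q r hqr (htop' r))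
      ((xt.src_mor 0 q h0q (htop' q)).trans
        (xt.rng_mor q r hqr (htop' r) (htop' q)).symm) =
      Λt.comp (D.eMor (pmk Λ w m0 (m0+q) hle1)) (D.eMor (pmk Λ w (m0+q) (m0+r) hle2))
        (src_eq_rng_pmk D w m0 (m0+q) (m0+r) hle1 hle2) := by
    rw [hsplit1, hcp1, hpmk_r]
  have hdeg1 : Λt.deg (xt.mor 0 q h0q (htop' q)) =
      Λt.deg (D.eMor (pmk Λ w m0 (m0+q) hle1)) := by
    rw [xt.deg_mor, D.deg_eq]
    funext i
    simp only [Pi.sub_apply, Pi.add_apply, Pi.zero_apply]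
    omega
  have hE := comp_inj (Λ := Λt) _ _ hcc hdeg1
  have hsplit2 := xt.comp_mor 0 p q h0p hpq (htop' q) (htop' p)
  have hcp2 := comp_pmk D w m0 (m0+p) (m0+q) hle1p hle2p
    (src_eq_rng_pmk D w m0 (m0+p) (m0+q) hle1p hle2p)
  have hcc2 : Λt.comp (xt.mor 0 p h0p (htop' p)) (xt.mor p q hpq (htop' q))
      ((xt.src_mor 0 p h0p (htop' p)).trans
        (xt.rng_mor p q hpq (htop' q) (htop' p)).symm) =
      Λt.comp (D.eMor (pmk Λ w m0 (m0+p) hle1p)) (D.eMor (pmk Λ w (m0+p) (m0+q) hle2p))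
        (src_eq_rng_pmk D w m0 (m0+p) (m0+q) hle1p hle2p) := by
    rw [hsplit2, hcp2, ← hE.1]
  have hdeg2 : Λt.deg (xt.mor 0 p h0p (htop' p)) =
      Λt.deg (D.eMor (pmk Λ w m0 (m0+p) hle1p)) := by
    rw [xt.deg_mor, D.deg_eq]
    funext i
    simp only [Pi.sub_apply, Pi.add_apply, Pi.zero_apply]
    omega
  have hF := comp_inj (Λ := Λt) _ _ hcc2 hdeg2
  exact hF.2

/-! #### Shifted boundary paths -/

lemma shift_bound {d : ℕ∞} {A Q : ℕ} (hA : (A:ℕ∞) ≤ d) (hQ : (Q:ℕ∞) ≤ d - A) :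
    ((A + Q : ℕ) : ℕ∞) ≤ d := by
  push_cast
  calc (A:ℕ∞) + Q ≤ (A:ℕ∞) + (d - A) := add_le_add_right hQ _
  _ = d := add_tsub_cancel_of_le hA

/-- The shift `σᵃ(x)` of a boundary path, for `a ≤ d(x)`. -/
noncomputable def shiftPath (x : BPath Λ) (a : Fin k → ℕ) (ha : ∀ i, ((a i : ℕ∞)) ≤ x.bdeg i) :
    BPath Λ where
  bdeg i := x.bdeg i - a i
  mor p q hpq hq := x.mor (a+p) (a+q) (add_le_add_right hpq a)
    (fun i => shift_bound (ha i) (hq i))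
  deg_mor p q hpq hq := by
    rw [x.deg_mor]
    funext i
    simp only [Pi.sub_apply, Pi.add_apply]
    omega
  mor_self p hp := x.mor_self (a+p) _
  src_mor p q hpq hq := x.src_mor (a+p) (a+q) _ _
  rng_mor p q hpq hq hp := x.rng_mor (a+p) (a+q) _ _ _
  comp_mor p q r hpq hqr hr hq := x.comp_mor (a+p) (a+q) (a+r) _ _ _ _
  boundary p hp i hpi := by
    refine x.boundary (a+p) (fun j => shift_bound (ha j) (hp j)) i ?_
    have h1 : (((a+p) i : ℕ)  : ℕ∞) = (a i : ℕ∞) + (p i : ℕ∞) := by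
      simp only [Pi.add_apply]
      push_cast
      rfl
    rw [h1, hpi]
    exact add_tsub_cancel_of_le (ha i)

lemma shiftPath_bdeg (x : BPath Λ) (a : Fin k → ℕ) (ha : ∀ i, ((a i : ℕ∞)) ≤ x.bdeg i)
    (i : Fin k) : (shiftPath x a ha).bdeg i = x.bdeg i - a i := rfl

lemma shiftPath_mor (x : BPath Λ) (a : Fin k → ℕ) (ha : ∀ i, ((a i : ℕ∞)) ≤ x.bdeg i)
    (p q : Fin k → ℕ) (hpq : p ≤ q)
    (hq : ∀ i, ((q i : ℕ∞)) ≤ (shiftPath x a ha).bdeg i) :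
    (shiftPath x a ha).mor p q hpq hq =
      x.mor (a+p) (a+q) (add_le_add_right hpq a)
        (fun i => shift_bound (ha i) (hq i)) := rfl

lemma shiftPath_range (x : BPath Λ) (a : Fin k → ℕ)
    (ha : ∀ i, ((a i : ℕ∞)) ≤ x.bdeg i) : (shiftPath x a ha).range = x.vtx a := by
  have h0 : ∀ i, ((((0:Fin k → ℕ)) i : ℕ∞)) ≤ (shiftPath x a ha).bdeg i := by
    intro i
    simp only [Pi.zero_apply, Nat.cast_zero]
    exact zero_le
  rw [BPath.range_eq _ h0, BPath.vtx_eq_rng_mor x a ha, shiftPath_mor]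
  exact congrArg Λ.rng (x.mor_congr (add_zero a) (add_zero a) _ _ _ _)

/-- The shift relation for `minDeg`. -/
lemma minDeg_shift {x : BPath Λ} {a : Fin k → ℕ} (ha : ∀ i, ((a i : ℕ∞)) ≤ x.bdeg i)
    (s : Fin k → ℕ) :
    minDeg (a + s) x.bdeg = a + minDeg s (fun i => x.bdeg i - a i) := by
  funext i
  cases hd : x.bdeg i with
  | top =>
    have hz : x.bdeg i - (a i : ℕ∞) = ⊤ := by rw [hd]; exact ENat.top_sub_coe _
    rw [minDeg_top hd]
    simp only [Pi.add_apply]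
    rw [minDeg_top hz]
  | coe Dd =>
    have hA : a i ≤ Dd := by
      have := ha i
      rw [hd] at this
      exact_mod_cast this
    have hz : x.bdeg i - (a i : ℕ∞) = ((Dd - a i : ℕ) : ℕ∞) := by
      rw [hd, ENat.coe_sub]
    rw [minDeg_coe hd]
    simp only [Pi.add_apply]
    rw [minDeg_coe hz]
    omega

/-- The shift relation for residuals. -/
lemma residual_shift {x : BPath Λ} {a : Fin k → ℕ} (ha : ∀ i, ((a i : ℕ∞)) ≤ x.bdeg i)
    (s : Fin k → ℕ) (i : Fin k) :
    (a + s) i - minDeg (a + s) x.bdeg i = s i - minDeg s (fun j => x.bdeg j - a j) i := by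
  rw [minDeg_shift ha s]
  simp only [Pi.add_apply]
  omega

/-! #### Aperiodicity of `Λ` from aperiodicity of the desourcification -/

lemma aperiodic_of_desource (hlc : Λ.LocallyConvex) (D : Desourcification Λ Λt)
    (hat : Aperiodic Λt) : Aperiodic Λ := by
  intro v m n hmn
  set y := Λ.boundaryPath hlc v with hy
  obtain ⟨xt, hxr, hdisj⟩ := hat (D.eObj (vmk Λ y 0)) m n hmn
  have htop : ∀ i, xt.bdeg i = ⊤ := bdeg_top_of_noSources (desource_noSources D) xt
  have htop' : ∀ (q : Fin k → ℕ) (i : Fin k), ((q i : ℕ∞)) ≤ xt.bdeg i := by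
    intro q i; rw [htop i]; exact le_top
  have hmin : ∀ s : Fin k → ℕ, minDeg s xt.bdeg = s :=
    fun s => minDeg_eq_of_le (fun i => htop' s i)
  have hB : ¬ xt.shiftsEq m n := by
    rcases hdisj with h | h
    · exfalso
      apply h
      funext i
      have e1 := congrFun (hmin m) i
      have e2 := congrFun (hmin n) i
      rw [e1, e2]
      omega
    · rw [hmin m, hmin n] at h
      exact h
  have hC1 : ∀ i, xt.bdeg i - (m i : ℕ∞) = xt.bdeg i - (n i : ℕ∞) := by
    intro i; rw [htop i]; rw [ENat.top_sub_coe, ENat.top_sub_coe]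
  have hC2 : ¬ ∀ (p q : Fin k → ℕ) (hpq : p ≤ q)
      (hqa : ∀ i, (((q + m) i : ℕ∞)) ≤ xt.bdeg i)
      (hqb : ∀ i, (((q + n) i : ℕ∞)) ≤ xt.bdeg i),
      xt.mor (p + m) (q + m) (add_le_add_left hpq m) hqa =
        xt.mor (p + n) (q + n) (add_le_add_left hpq n) hqb :=
    fun hall => hB ⟨hC1, hall⟩
  simp only [not_forall] at hC2
  obtain ⟨p, q, hpq, hqa, hqb, hne⟩ := hC2
  set r := q + m + n with hr
  have hqmr : q + m ≤ r := by intro i; simp only [hr, Pi.add_apply]; omega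
  have hqnr : q + n ≤ r := by intro i; simp only [hr, Pi.add_apply]; omega
  have h0r : (0:Fin k → ℕ) ≤ r := fun i => Nat.zero_le _
  obtain ⟨w, a, hw⟩ := extract D xt htop r
  -- identify the base vertex
  have hrng : Λt.rng (xt.mor 0 r h0r (htop' r)) = D.eObj (vmk Λ y 0) := by
    have h1 := xt.rng_mor 0 r h0r (htop' r) (htop' 0)
    have h2 : xt.range = Λt.rng (xt.mor 0 0 le_rfl (htop' 0)) :=
      BPath.range_eq xt (htop' 0)
    rw [h1, ← h2]
    exact hxr
  have e0 := hw 0 r h0r le_rfl (htop' r)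
  rw [e0, D.rng_eq] at hrng
  have hkey : vkey Λ (w, a) = vkey Λ (y, (0:Fin k → ℕ)) := by
    have h3 : vmk Λ w (a + 0) = vmk Λ w a := congrArg (vmk Λ w) (add_zero a)
    rw [h3] at hrng
    exact vmk_exact (D.eObj.injective hrng)
  have hv1 : w.vtx a = y.vtx 0 := congrArg Prod.fst hkey
  have hv2 : ∀ i, a i - minDeg a w.bdeg i = 0 := by
    intro i
    have h3 : a i - minDeg a w.bdeg i = (0:Fin k → ℕ) i - minDeg 0 y.bdeg i :=
      congrFun (congrArg Prod.snd hkey) i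
    simp only [Pi.zero_apply] at h3
    omega
  have haw : ∀ i, ((a i : ℕ∞)) ≤ w.bdeg i := by
    intro i
    refine le_of_minDeg_eq (m := a) (i := i) ?_
    have h3 := hv2 i
    have h4 := minDeg_le a w.bdeg i
    omega
  have hvv : w.vtx a = v := hv1.trans (Λ.boundaryPath_range hlc v)
  set z := shiftPath w a haw with hz
  have hzb : z.bdeg = fun i => w.bdeg i - (a i : ℕ∞) := rfl
  refine ⟨z, (shiftPath_range w a haw).trans hvv, ?_⟩
  by_contra hcon
  rw [not_or] at hcon
  obtain ⟨hAne, hBne⟩ := hcon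
  have hA := not_not.mp hAne
  have hB2 := not_not.mp hBne
  -- coordinatewise description of `minDeg _ z.bdeg`
  have master0 : ∀ i, (∀ s : Fin k → ℕ, minDeg s z.bdeg i = s i) ∨
      ∃ Dd : ℕ, w.bdeg i = (Dd : ℕ∞) ∧ a i ≤ Dd ∧
        ∀ s : Fin k → ℕ, minDeg s z.bdeg i = min (s i) (Dd - a i) := by
    intro i
    cases hd : w.bdeg i with
    | top =>
      left
      intro s
      apply minDeg_top
      show w.bdeg i - (a i : ℕ∞) = ⊤
      rw [hd]
      exact ENat.top_sub_coe _
    | coe Dd =>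
      right
      have hAi : a i ≤ Dd := by
        have h5 := haw i
        rw [hd] at h5
        exact_mod_cast h5
      refine ⟨Dd, rfl, hAi, fun s => minDeg_coe ?_⟩
      show w.bdeg i - (a i : ℕ∞) = ((Dd - a i : ℕ) : ℕ∞)
      rw [hd, ENat.coe_sub]
  -- at coordinates with finite boundary degree, m and n agree
  have hfin : ∀ i : Fin k, (∃ Dd : ℕ, w.bdeg i = (Dd : ℕ∞)) → m i = n i := by
    intro i hex
    rcases master0 i with hT | ⟨Dd, hd, hAi, hE⟩
    · obtain ⟨Dd, hd⟩ := hex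
      exfalso
      have h5 : minDeg (fun _ => Dd + 1) z.bdeg i = Dd + 1 := hT _
      have h6 : ((Dd + 1 : ℕ) : ℕ∞) ≤ z.bdeg i := le_of_minDeg_eq h5
      have h7 : z.bdeg i ≤ (Dd : ℕ∞) := by
        show w.bdeg i - (a i : ℕ∞) ≤ _
        rw [hd]
        exact le_trans tsub_le_self le_rfl
      have h8 := le_trans h6 h7
      have h9 : Dd + 1 ≤ Dd := by exact_mod_cast h8
      omega
    · have h5 : m i - minDeg m z.bdeg i = n i - minDeg n z.bdeg i := congrFun hA i
      rw [hE m, hE n] at h5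
      have h6 := hB2.1 i
      have hzE : z.bdeg i = ((Dd - a i : ℕ) : ℕ∞) := by
        show w.bdeg i - (a i : ℕ∞) = _
        rw [hd, ENat.coe_sub]
      rw [hzE, hE m, hE n, ← ENat.coe_sub, ← ENat.coe_sub] at h6
      have h7 := Nat.cast_inj.mp h6
      omega
  -- now show the two Λt-morphisms agree, contradiction
  apply hne
  have e1 := hw (p+m) (q+m) (add_le_add_left hpq m) hqmr hqa
  have e2 := hw (p+n) (q+n) (add_le_add_left hpq n) hqnr hqb
  rw [e1, e2]
  refine congrArg D.eMor (pmk_sound ?_)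
  set a₀ := minDeg m z.bdeg with ha₀
  set b₀ := minDeg n z.bdeg with hb₀
  set p' : Fin k → ℕ := fun i => minDeg (p+m) z.bdeg i - a₀ i with hp'
  set q' : Fin k → ℕ := fun i => minDeg (q+m) z.bdeg i - a₀ i with hq'
  have hab : ∀ i, a₀ i = minDeg m z.bdeg i ∧ b₀ i = minDeg n z.bdeg i ∧
      p' i = minDeg (p+m) z.bdeg i - a₀ i ∧ q' i = minDeg (q+m) z.bdeg i - a₀ i :=
    fun i => ⟨rfl, rfl, rfl, rfl⟩
  have F1 : p' + a₀ = minDeg (p+m) z.bdeg := by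
    funext i
    obtain ⟨e1', e2', e3', e4'⟩ := hab i
    show p' i + a₀ i = _
    rcases master0 i with hT | ⟨Dd, hd, hAi, hE⟩
    · rw [e3', e1', hT m, hT (p+m)]
      simp only [Pi.add_apply]
      omega
    · rw [e3', e1', hE m, hE (p+m)]
      simp only [Pi.add_apply]
      omega
  have F2 : q' + a₀ = minDeg (q+m) z.bdeg := by
    funext i
    obtain ⟨e1', e2', e3', e4'⟩ := hab i
    show q' i + a₀ i = _
    rcases master0 i with hT | ⟨Dd, hd, hAi, hE⟩
    · rw [e4', e1', hT m, hT (q+m)]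
      simp only [Pi.add_apply]
      omega
    · rw [e4', e1', hE m, hE (q+m)]
      simp only [Pi.add_apply]
      omega
  have F3 : p' + b₀ = minDeg (p+n) z.bdeg := by
    funext i
    obtain ⟨e1', e2', e3', e4'⟩ := hab i
    show p' i + b₀ i = _
    rcases master0 i with hT | ⟨Dd, hd, hAi, hE⟩
    · rw [e3', e2', e1', hT m, hT n, hT (p+m), hT (p+n)]
      simp only [Pi.add_apply]
      omega
    · have hmni := hfin i ⟨Dd, hd⟩
      rw [e3', e2', e1', hE m, hE n, hE (p+m), hE (p+n)]
      simp only [Pi.add_apply]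
      omega
  have F4 : q' + b₀ = minDeg (q+n) z.bdeg := by
    funext i
    obtain ⟨e1', e2', e3', e4'⟩ := hab i
    show q' i + b₀ i = _
    rcases master0 i with hT | ⟨Dd, hd, hAi, hE⟩
    · rw [e4', e2', e1', hT m, hT n, hT (q+m), hT (q+n)]
      simp only [Pi.add_apply]
      omega
    · have hmni := hfin i ⟨Dd, hd⟩
      rw [e4', e2', e1', hE m, hE n, hE (q+m), hE (q+n)]
      simp only [Pi.add_apply]
      omega
  have F5 : p' ≤ q' := by
    intro i
    obtain ⟨e1', e2', e3', e4'⟩ := hab i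
    rcases master0 i with hT | ⟨Dd, hd, hAi, hE⟩
    · rw [e3', e4', e1', hT m, hT (p+m), hT (q+m)]
      simp only [Pi.add_apply]
      have hpqi : p i ≤ q i := hpq i
      omega
    · rw [e3', e4', e1', hE m, hE (p+m), hE (q+m)]
      simp only [Pi.add_apply]
      have hpqi : p i ≤ q i := hpq i
      omega
  have hb1 : ∀ i, (((q' + a₀) i : ℕ∞)) ≤ z.bdeg i := by
    intro i
    rw [congrFun F2 i, coe_minDeg]
    exact min_le_right _ _
  have hb2 : ∀ i, (((q' + b₀) i : ℕ∞)) ≤ z.bdeg i := by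
    intro i
    rw [congrFun F4 i, coe_minDeg]
    exact min_le_right _ _
  have hstep := hB2.2 p' q' F5 hb1 hb2
  -- residual components
  have hres : (fun i => (a+(p+m)) i - minDeg (a+(p+m)) w.bdeg i) =
      (fun i => (a+(p+n)) i - minDeg (a+(p+n)) w.bdeg i) := by
    funext i
    rw [residual_shift haw (p+m) i, residual_shift haw (p+n) i, ← hzb]
    rcases master0 i with hT | ⟨Dd, hd, hAi, hE⟩
    · rw [hT (p+m), hT (p+n)]
      simp only [Pi.add_apply]
      omega
    · have hmni := hfin i ⟨Dd, hd⟩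
      rw [hE (p+m), hE (p+n)]
      simp only [Pi.add_apply]
      omega
  -- segment components
  have hseg : w.seg (a+(p+m)) (a+(q+m)) (add_le_add_right (add_le_add_left hpq m) a) =
      w.seg (a+(p+n)) (a+(q+n)) (add_le_add_right (add_le_add_left hpq n) a) := by
    unfold BPath.seg
    have EL1 : minDeg (a+(p+m)) w.bdeg = a + (p' + a₀) := by
      rw [minDeg_shift haw (p+m), ← hzb, ← F1]
    have EL2 : minDeg (a+(q+m)) w.bdeg = a + (q' + a₀) := by
      rw [minDeg_shift haw (q+m), ← hzb, ← F2]
    have ER1 : minDeg (a+(p+n)) w.bdeg = a + (p' + b₀) := by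
      rw [minDeg_shift haw (p+n), ← hzb, ← F3]
    have ER2 : minDeg (a+(q+n)) w.bdeg = a + (q' + b₀) := by
      rw [minDeg_shift haw (q+n), ← hzb, ← F4]
    have step1 : w.mor (minDeg (a+(p+m)) w.bdeg) (minDeg (a+(q+m)) w.bdeg)
        (minDeg_mono (add_le_add_right (add_le_add_left hpq m) a) w.bdeg)
        (fun i => minDeg_le_deg _ w.bdeg i) =
        z.mor (p' + a₀) (q' + a₀) (add_le_add_left F5 a₀) hb1 := by
      rw [shiftPath_mor]
      exact w.mor_congr EL1 EL2 _ _ _ _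
    have step2 : w.mor (minDeg (a+(p+n)) w.bdeg) (minDeg (a+(q+n)) w.bdeg)
        (minDeg_mono (add_le_add_right (add_le_add_left hpq n) a) w.bdeg)
        (fun i => minDeg_le_deg _ w.bdeg i) =
        z.mor (p' + b₀) (q' + b₀) (add_le_add_left F5 b₀) hb2 := by
      rw [shiftPath_mor]
      exact w.mor_congr ER1 ER2 _ _ _ _
    rw [step1, step2]
    exact hstep
  -- assemble the pkey equality
  refine Prod.ext_iff.mpr ⟨hseg, Prod.ext_iff.mpr ⟨?_, ?_⟩⟩
  · exact hres
  · show (fun i => (a+(q+m)) i - (a+(p+m)) i) = (fun i => (a+(q+n)) i - (a+(p+n)) i)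
    funext i
    simp only [Pi.add_apply]
    omega

/-! #### Aperiodicity of the desourcification from aperiodicity of `Λ` -/

lemma liftPath_mor (D : Desourcification Λ Λt) (x : BPath Λ) (c : Fin k → ℕ)
    (p q : Fin k → ℕ) (hpq : p ≤ q)
    (hq : ∀ i, ((q i : ℕ∞)) ≤ (liftPath D x c).bdeg i) :
    (liftPath D x c).mor p q hpq hq =
      D.eMor (pmk Λ x (c+p) (c+q) (add_le_add_right hpq c)) := rfl

lemma desource_aperiodic (D : Desourcification Λ Λt) (ha : Aperiodic Λ) :
    Aperiodic Λt := by
  intro vt m n hmn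
  obtain ⟨ym, hym⟩ := Quotient.exists_rep (D.eObj.symm vt)
  obtain ⟨y, m₀⟩ := ym
  set v := y.vtx m₀ with hv
  set c : Fin k → ℕ := fun i => m₀ i - minDeg m₀ y.bdeg i with hc
  have hcm : c + m ≠ c + n := by
    intro h
    apply hmn
    funext i
    have h2 := congrFun h i
    simp only [Pi.add_apply] at h2
    omega
  obtain ⟨x, hxr, hdisj⟩ := ha v (c+m) (c+n) hcm
  have h0x : ∀ j, ((((0:Fin k → ℕ)) j : ℕ∞)) ≤ x.bdeg j := by
    intro j
    simp only [Pi.zero_apply, Nat.cast_zero]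
    exact zero_le
  -- the vertex `v` supports no `eᵢ`-edge when `c i > 0`, hence `x` stops there
  have hxb : ∀ i, 0 < c i → x.bdeg i = 0 := by
    intro i hci
    have hci' : minDeg m₀ y.bdeg i < m₀ i := by
      have h2 : c i = m₀ i - minDeg m₀ y.bdeg i := rfl
      omega
    have hyb : ((minDeg m₀ y.bdeg i : ℕ∞)) = y.bdeg i := by
      rw [coe_minDeg]
      cases hd : y.bdeg i with
      | top =>
        exfalso
        rw [minDeg_top hd] at hci'
        omega
      | coe Dd =>
        rw [minDeg_coe hd] at hci'
        have : Dd ≤ m₀ i := by omega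
        exact min_eq_right (by exact_mod_cast this)
    have hnov := y.boundary (minDeg m₀ y.bdeg) (fun j => minDeg_le_deg m₀ y.bdeg j) i hyb
    by_contra hne0
    obtain ⟨g, hg1, hg2⟩ := x.exists_unit_edge i hne0 h0x
    apply hnov
    refine ⟨g, ?_, hg2⟩
    rw [hg1, ← BPath.range_eq x h0x]
    exact hxr
  have hminc : minDeg c x.bdeg = 0 := by
    funext i
    rcases Nat.eq_zero_or_pos (c i) with h0 | hpos
    · have := minDeg_le c x.bdeg i
      simp only [Pi.zero_apply]
      omega
    · have hb0 : x.bdeg i = ((0:ℕ) : ℕ∞) := by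
        rw [hxb i hpos]
        rfl
      rw [minDeg_coe hb0]
      simp only [Pi.zero_apply]
      omega
  have htopx : ∀ (q : Fin k → ℕ) (i : Fin k), ((q i : ℕ∞)) ≤ (liftPath D x c).bdeg i := by
    intro q i
    rw [liftPath_bdeg]
    exact le_top
  -- the lifted path is based at `vt`
  have hkey0 : vkey Λ (x, c) = vkey Λ (y, m₀) := by
    refine Prod.ext_iff.mpr ⟨?_, ?_⟩
    · show x.vtx c = y.vtx m₀
      refine Eq.trans ?_ hxr
      exact x.vtx_congr (hminc.trans (minDeg_zero x.bdeg).symm)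
    · show (fun i => c i - minDeg c x.bdeg i) = (fun i => m₀ i - minDeg m₀ y.bdeg i)
      funext i
      have h2 := congrFun hminc i
      have h3 : c i = m₀ i - minDeg m₀ y.bdeg i := rfl
      simp only [Pi.zero_apply] at h2
      omega
  have hxtr : (liftPath D x c).range = vt := by
    rw [BPath.range_eq (liftPath D x c) (htopx 0)]
    rw [liftPath_mor D x c 0 0 le_rfl]
    rw [D.rng_eq]
    have e1 : vmk Λ x (c + 0) = vmk Λ x c := congrArg (vmk Λ x) (add_zero c)
    rw [e1, vmk_sound hkey0]
    have e2 : vmk Λ y m₀ = D.eObj.symm vt := hym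
    rw [e2]
    exact D.eObj.apply_symm_apply vt
  refine ⟨liftPath D x c, hxtr, Or.inr ?_⟩
  have hminm : minDeg m (liftPath D x c).bdeg = m :=
    minDeg_eq_of_le (fun i => htopx m i)
  have hminn : minDeg n (liftPath D x c).bdeg = n :=
    minDeg_eq_of_le (fun i => htopx n i)
  rw [hminm, hminn]
  intro hse
  obtain ⟨hse1, hse2⟩ := hse
  -- key equalities of `pkey`s
  have key : ∀ (p q : Fin k → ℕ) (hpq : p ≤ q),
      pkey Λ ⟨(x, (c+(p+m), c+(q+m))), add_le_add_right (add_le_add_left hpq m) c⟩ =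
      pkey Λ ⟨(x, (c+(p+n), c+(q+n))), add_le_add_right (add_le_add_left hpq n) c⟩ := by
    intro p q hpq
    have h := hse2 p q hpq (fun i => htopx (q+m) i) (fun i => htopx (q+n) i)
    rw [liftPath_mor D x c (p+m) (q+m), liftPath_mor D x c (p+n) (q+n)] at h
    exact pmk_exact (D.eMor.injective h)
  have hres : ∀ (p : Fin k → ℕ) (i : Fin k),
      (c+(p+m)) i - minDeg (c+(p+m)) x.bdeg i =
      (c+(p+n)) i - minDeg (c+(p+n)) x.bdeg i := by
    intro p i
    have h := key p p le_rfl
    have h2 : (fun j => (c+(p+m)) j - minDeg (c+(p+m)) x.bdeg j) =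
        (fun j => (c+(p+n)) j - minDeg (c+(p+n)) x.bdeg j) :=
      congrArg (fun t => t.2.1) h
    exact congrFun h2 i
  have hsegeq : ∀ (p q : Fin k → ℕ) (hpq : p ≤ q),
      x.seg (c+(p+m)) (c+(q+m)) (add_le_add_right (add_le_add_left hpq m) c) =
      x.seg (c+(p+n)) (c+(q+n)) (add_le_add_right (add_le_add_left hpq n) c) :=
    fun p q hpq => congrArg Prod.fst (key p q hpq)
  -- refute the disjunction obtained from aperiodicity of Λ
  rcases hdisj with h | h
  · apply h
    funext i
    have hr := hres 0 i
    have e1 : c + ((0:Fin k → ℕ) + m) = c + m := by rw [zero_add]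
    have e2 : c + ((0:Fin k → ℕ) + n) = c + n := by rw [zero_add]
    rw [e1, e2] at hr
    exact hr
  · apply h
    constructor
    · intro i
      cases hd : x.bdeg i with
      | top => rw [ENat.top_sub_coe, ENat.top_sub_coe]
      | coe Dd =>
        have hmni : m i = n i := by
          set pp : Fin k → ℕ := fun j => if j = i then Dd else 0 with hpp
          have hppi : pp i = Dd := by rw [hpp]; simp
          have hr := hres pp i
          rw [minDeg_coe hd, minDeg_coe hd] at hr
          simp only [Pi.add_apply, hppi] at hr
          omega
        have hcc : (c+m) i = (c+n) i := by simp only [Pi.add_apply, hmni]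
        rw [minDeg_coe hd, minDeg_coe hd, hcc]
    · intro p q hpq hqa hqb
      have EEm : minDeg (c+(p+m)) x.bdeg = p + minDeg (c+m) x.bdeg ∧
          minDeg (c+(q+m)) x.bdeg = q + minDeg (c+m) x.bdeg := by
        constructor <;> funext i <;>
        · cases hd : x.bdeg i with
          | top =>
            rw [minDeg_top hd]
            simp only [Pi.add_apply]
            rw [minDeg_top hd]
            simp only [Pi.add_apply]
            omega
          | coe Dd =>
            have hq' : q i + min (c i + m i) Dd ≤ Dd := by
              have h5 := hqa i
              rw [hd] at h5
              have h6 : (q + minDeg (c+m) x.bdeg) i ≤ Dd := by exact_mod_cast h5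
              simp only [Pi.add_apply] at h6
              rw [minDeg_coe hd] at h6
              simp only [Pi.add_apply] at h6
              exact h6
            have hpqi : p i ≤ q i := hpq i
            rw [minDeg_coe hd]
            simp only [Pi.add_apply]
            rw [minDeg_coe hd]
            simp only [Pi.add_apply]
            omega
      have EEn : minDeg (c+(p+n)) x.bdeg = p + minDeg (c+n) x.bdeg ∧
          minDeg (c+(q+n)) x.bdeg = q + minDeg (c+n) x.bdeg := by
        constructor <;> funext i <;>
        · cases hd : x.bdeg i with
          | top =>
            rw [minDeg_top hd]
            simp only [Pi.add_apply]
            rw [minDeg_top hd]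
            simp only [Pi.add_apply]
            omega
          | coe Dd =>
            have hq' : q i + min (c i + n i) Dd ≤ Dd := by
              have h5 := hqb i
              rw [hd] at h5
              have h6 : (q + minDeg (c+n) x.bdeg) i ≤ Dd := by exact_mod_cast h5
              simp only [Pi.add_apply] at h6
              rw [minDeg_coe hd] at h6
              simp only [Pi.add_apply] at h6
              exact h6
            have hpqi : p i ≤ q i := hpq i
            rw [minDeg_coe hd]
            simp only [Pi.add_apply]
            rw [minDeg_coe hd]
            simp only [Pi.add_apply]
            omega
      have hs := hsegeq p q hpq
      unfold BPath.seg at hs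
      calc x.mor (p + minDeg (c+m) x.bdeg) (q + minDeg (c+m) x.bdeg)
            (add_le_add_left hpq _) hqa
          = x.mor (minDeg (c+(p+m)) x.bdeg) (minDeg (c+(q+m)) x.bdeg)
            (minDeg_mono (add_le_add_right (add_le_add_left hpq m) c) x.bdeg)
            (fun i => minDeg_le_deg _ x.bdeg i) :=
            x.mor_congr EEm.1.symm EEm.2.symm _ _ _ _
        _ = x.mor (minDeg (c+(p+n)) x.bdeg) (minDeg (c+(q+n)) x.bdeg)
            (minDeg_mono (add_le_add_right (add_le_add_left hpq n) c) x.bdeg)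
            (fun i => minDeg_le_deg _ x.bdeg i) := hs
        _ = x.mor (p + minDeg (c+n) x.bdeg) (q + minDeg (c+n) x.bdeg)
            (add_le_add_left hpq _) hqb :=
            x.mor_congr EEn.1 EEn.2 _ _ _ _

end KGraph

/-- **Lemma 4.3 (1).** Let `Λ` be a row-finite locally convex `k`-graph and `Λ̃` its
desourcification.  Then `Λ̃` is aperiodic iff `Λ` is aperiodic. -/
theorem desourcification_aperiodic_iff
    {k : ℕ} (Λ Λt : KGraph k) (hrf : Λ.RowFinite) (hlc : Λ.LocallyConvex)
    (D : KGraph.Desourcification Λ Λt) :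
    KGraph.Aperiodic Λt ↔ KGraph.Aperiodic Λ :=
  ⟨fun hat => KGraph.aperiodic_of_desource hlc D hat,
    fun ha => KGraph.desource_aperiodic D ha⟩
end

section
/- Let Λ be a row-finite locally convex k-graph and R a field. Then every prime graded ideal of KP_R(Λ) is of the form I_H for some saturated hereditary subset H ⊆ Λ⁰ such that Λ⁰∖H is a maximal tail. -/
open scoped ENat

open scoped Classical

/-! ## Auxiliary machinery for the proof -/

namespace KGraph

section AuxGraph

variable {k : ℕ} {Λ : KGraph k}

lemma eq_id_of_deg_zero {f : Λ.Mor} (h : Λ.deg f = 0) : f = Λ.id (Λ.rng f) := by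
  obtain ⟨p, hp, hu⟩ := Λ.factorization f 0 0 (by simp [h])
  have h1 := hu (Λ.id (Λ.rng f), f) ⟨Λ.src_id (Λ.rng f), Λ.deg_id _, h, Λ.id_comp f⟩
  have h2 := hu (f, Λ.id (Λ.src f)) ⟨(Λ.rng_id (Λ.src f)).symm, h, Λ.deg_id _, Λ.comp_id f⟩
  exact congrArg Prod.fst (h2.trans h1.symm)

lemma src_eq_rng_of_deg_zero {f : Λ.Mor} (h : Λ.deg f = 0) : Λ.src f = Λ.rng f := by
  conv_lhs => rw [eq_id_of_deg_zero h]
  rw [Λ.src_id]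

/-- Totalized composition. -/
noncomputable def cmp (Λ : KGraph k) (f h : Λ.Mor) : Λ.Mor :=
  if hh : Λ.src f = Λ.rng h then Λ.comp f h hh else f

lemma cmp_eq {f h : Λ.Mor} (hh : Λ.src f = Λ.rng h) : cmp Λ f h = Λ.comp f h hh := dif_pos hh

lemma src_cmp {f h : Λ.Mor} (hh : Λ.src f = Λ.rng h) : Λ.src (cmp Λ f h) = Λ.src h := by
  rw [cmp_eq hh, Λ.src_comp]

lemma rng_cmp {f h : Λ.Mor} (hh : Λ.src f = Λ.rng h) : Λ.rng (cmp Λ f h) = Λ.rng f := by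
  rw [cmp_eq hh, Λ.rng_comp]

lemma deg_cmp {f h : Λ.Mor} (hh : Λ.src f = Λ.rng h) :
    Λ.deg (cmp Λ f h) = Λ.deg f + Λ.deg h := by
  rw [cmp_eq hh, Λ.deg_comp]

lemma self_mem_LeSet (f : Λ.Mor) : f ∈ Λ.LeSet (Λ.deg f) := by
  refine ⟨le_rfl, fun i hle => ?_⟩
  exfalso
  have h := hle i
  simp [unitVec] at h

lemma comp_mem_LeSet {g h : Λ.Mor} {N : Fin k → ℕ} (hg : Λ.deg g ≤ N)
    (hh : h ∈ Λ.LeSet fun j => N j - Λ.deg g j) (hgh : Λ.src g = Λ.rng h) :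
    cmp Λ g h ∈ Λ.LeSet N := by
  obtain ⟨hle, hbd⟩ := hh
  constructor
  · intro j
    have h1 : Λ.deg h j ≤ N j - Λ.deg g j := hle j
    have h2 : Λ.deg g j ≤ N j := hg j
    rw [deg_cmp hgh]
    show Λ.deg g j + Λ.deg h j ≤ N j
    omega
  · intro i hle2
    rw [src_cmp hgh]
    refine hbd i fun j => ?_
    have h1 := hle2 j
    rw [deg_cmp hgh] at h1
    have h2 : Λ.deg g j ≤ N j := hg j
    show Λ.deg h j + unitVec i j ≤ N j - Λ.deg g j
    have h3 : Λ.deg g j + Λ.deg h j + unitVec i j ≤ N j := h1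
    omega

/-- The set `vΛ^{≤ n}`. -/
def ES (Λ : KGraph k) (v : Λ.Obj) (n : Fin k → ℕ) : Set Λ.Mor :=
  {g | g ∈ Λ.LeSet n ∧ Λ.rng g = v}

lemma ES_finite (hrf : Λ.RowFinite) (v : Λ.Obj) (n : Fin k → ℕ) : (ES Λ v n).Finite := by
  refine Set.Finite.subset (Set.Finite.biUnion (Set.finite_Iic n) fun m _ => hrf v m) ?_
  intro g hg
  exact Set.mem_biUnion (Set.mem_Iic.mpr hg.1.1) ⟨hg.2, rfl⟩

lemma ES_zero (v : Λ.Obj) : ES Λ v 0 = {Λ.id v} := by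
  ext g
  constructor
  · rintro ⟨⟨hle, -⟩, hr⟩
    have hdeg : Λ.deg g = 0 := funext fun i => Nat.le_zero.mp (hle i)
    have := eq_id_of_deg_zero hdeg
    rw [hr] at this
    exact this
  · rintro rfl
    refine ⟨⟨by rw [Λ.deg_id], fun i hle => ?_⟩, Λ.rng_id v⟩
    exfalso
    have h := hle i
    simp [Λ.deg_id, unitVec] at h

/-- Reachability: `vΛw ≠ ∅`. -/
def Reach (Λ : KGraph k) (v w : Λ.Obj) : Prop := ∃ f : Λ.Mor, Λ.rng f = v ∧ Λ.src f = w

lemma reach_self (v : Λ.Obj) : Reach Λ v v := ⟨Λ.id v, Λ.rng_id v, Λ.src_id v⟩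

lemma reach_trans {u v w : Λ.Obj} (h1 : Reach Λ u v) (h2 : Reach Λ v w) : Reach Λ u w := by
  obtain ⟨f, hf1, hf2⟩ := h1
  obtain ⟨g, hg1, hg2⟩ := h2
  have hc : Λ.src f = Λ.rng g := hf2.trans hg1.symm
  exact ⟨cmp Λ f g, by rw [rng_cmp hc, hf1], by rw [src_cmp hc, hg2]⟩

lemma hereditary_setOf_reach (v : Λ.Obj) : Λ.Hereditary {w | Reach Λ v w} := by
  intro u w hu hedge
  exact reach_trans hu hedge

end AuxGraph

end KGraph

namespace KGraph

section AuxKP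

variable {k : ℕ} {Λ : KGraph k} {R : Type} [CommRing R] {A : Type}
  [NonUnitalRing A] [Module R A] [SMulCommClass R A A] [IsScalarTower R A A]
  (F : KPFamily Λ R A)

lemma KPFamily.S_mul_S {f h : Λ.Mor} (hh : Λ.src f = Λ.rng h) :
    F.S f * F.S h = F.S (cmp Λ f h) := by rw [cmp_eq hh, F.S_comp f h hh]

lemma KPFamily.S'_mul_S' {f h : Λ.Mor} (hh : Λ.src f = Λ.rng h) :
    F.S' h * F.S' f = F.S' (cmp Λ f h) := by rw [cmp_eq hh, F.S'_comp f h hh]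

lemma KPFamily.P_mul_S (v : Λ.Obj) (f : Λ.Mor) :
    F.P v * F.S f = if v = Λ.rng f then F.S f else 0 := by
  split_ifs with h
  · rw [h, F.P_S]
  · rw [← F.P_S f, ← mul_assoc, F.P_orthogonal v _ h, zero_mul]

lemma KPFamily.P_eq_S_id_mul (v : Λ.Obj) :
    F.P v = F.S (Λ.id v) * F.S' (Λ.id v) := by
  rw [F.S_id, F.S'_id, F.P_mul_self]

lemma KPFamily.KP3' {n : Fin k → ℕ} {f g : Λ.Mor} (hf : f ∈ Λ.LeSet n) (hg : g ∈ Λ.LeSet n) :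
    F.S' f * F.S g = if f = g then F.P (Λ.src f) else 0 := by
  by_cases hn : n = 0
  · subst hn
    have hf0 : Λ.deg f = 0 := funext fun i => Nat.le_zero.mp (hf.1 i)
    have hg0 : Λ.deg g = 0 := funext fun i => Nat.le_zero.mp (hg.1 i)
    have hfid := eq_id_of_deg_zero hf0
    have hgid := eq_id_of_deg_zero hg0
    by_cases hvw : Λ.rng f = Λ.rng g
    · have hfg : f = g := by rw [hfid, hgid, hvw]
      rw [if_pos hfg, hfg]
      conv_lhs => rw [hgid, F.S'_id, F.S_id]
      rw [F.P_mul_self, src_eq_rng_of_deg_zero hg0, eq_id_of_deg_zero hg0, Λ.rng_id]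
    · have hfg : f ≠ g := by
        intro h; exact hvw (by rw [h])
      rw [if_neg hfg]
      conv_lhs => rw [hfid, hgid, F.S'_id, F.S_id]
      exact F.P_orthogonal _ _ hvw
  · exact F.KP3 n hn f hf g hg

lemma KPFamily.KP4' (hrf : Λ.RowFinite) (v : Λ.Obj) (n : Fin k → ℕ) :
    F.P v = ∑ g ∈ (ES_finite hrf v n).toFinset, F.S g * F.S' g := by
  by_cases hn : n = 0
  · subst hn
    have hset : (ES_finite hrf v 0).toFinset = {Λ.id v} := by
      ext g
      rw [Set.Finite.mem_toFinset, ES_zero, Set.mem_singleton_iff, Finset.mem_singleton]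
    rw [hset, Finset.sum_singleton, F.S_id, F.S'_id, F.P_mul_self]
  · have h1 := F.KP4 v n hn
    have h2 : ∑ᶠ f ∈ (↑(ES_finite hrf v n).toFinset : Set Λ.Mor), F.S f * F.S' f
        = ∑ f ∈ (ES_finite hrf v n).toFinset, F.S f * F.S' f := finsum_mem_coe_finset _ _
    rw [(ES_finite hrf v n).coe_toFinset] at h2
    rw [← h2]
    exact h1

lemma KPFamily.expandS (hrf : Λ.RowFinite) (f : Λ.Mor) (m : Fin k → ℕ) :
    F.S f = ∑ h ∈ (ES_finite hrf (Λ.src f) m).toFinset, F.S (cmp Λ f h) * F.S' h := by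
  conv_lhs => rw [← F.S_P f, F.KP4' hrf (Λ.src f) m]
  rw [Finset.mul_sum]
  refine Finset.sum_congr rfl fun h hh => ?_
  have hr : Λ.rng h = Λ.src f := ((ES_finite hrf _ m).mem_toFinset.mp hh).2
  rw [← mul_assoc, F.S_mul_S hr.symm]

lemma KPFamily.expandS' (hrf : Λ.RowFinite) (g : Λ.Mor) (m : Fin k → ℕ) :
    F.S' g = ∑ h ∈ (ES_finite hrf (Λ.src g) m).toFinset, F.S h * F.S' (cmp Λ g h) := by
  conv_lhs => rw [← F.P_S' g, F.KP4' hrf (Λ.src g) m]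
  rw [Finset.sum_mul]
  refine Finset.sum_congr rfl fun h hh => ?_
  have hr : Λ.rng h = Λ.src g := ((ES_finite hrf _ m).mem_toFinset.mp hh).2
  rw [mul_assoc, F.S'_mul_S' hr.symm]

lemma KPFamily.expand_pair (hrf : Λ.RowFinite) {f g : Λ.Mor} (hfg : Λ.src f = Λ.src g)
    (m : Fin k → ℕ) :
    F.S f * F.S' g
      = ∑ h ∈ (ES_finite hrf (Λ.src g) m).toFinset, F.S (cmp Λ f h) * F.S' (cmp Λ g h) := by
  conv_lhs => rw [F.expandS' hrf g m]
  rw [Finset.mul_sum]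
  refine Finset.sum_congr rfl fun h hh => ?_
  have hr : Λ.rng h = Λ.src g := ((ES_finite hrf _ m).mem_toFinset.mp hh).2
  rw [← mul_assoc, F.S_mul_S (hfg.trans hr.symm)]

lemma KPFamily.S'_mul_S_expand (hrf : Λ.RowFinite) (g p : Λ.Mor) :
    ∃ T : Finset (Λ.Mor × Λ.Mor),
      (∀ t ∈ T, Λ.rng t.1 = Λ.src g ∧ Λ.rng t.2 = Λ.src p ∧ Λ.src t.1 = Λ.src t.2) ∧
      F.S' g * F.S p = ∑ t ∈ T, F.S t.1 * F.S' t.2 := by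
  classical
  set m : Fin k → ℕ := Λ.deg g ⊔ Λ.deg p with hm
  have hgm : Λ.deg g ≤ m := le_sup_left
  have hpm : Λ.deg p ≤ m := le_sup_right
  set Eg := (ES_finite hrf (Λ.src g) fun j => m j - Λ.deg g j).toFinset with hEg
  set Ep := (ES_finite hrf (Λ.src p) fun j => m j - Λ.deg p j).toFinset with hEp
  refine ⟨(Eg ×ˢ Ep).filter fun t => cmp Λ g t.1 = cmp Λ p t.2, ?_, ?_⟩
  · rintro ⟨h1, h2⟩ ht
    rw [Finset.mem_filter, Finset.mem_product] at ht
    obtain ⟨⟨ht1, ht2⟩, heq⟩ := ht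
    have e1 : Λ.rng h1 = Λ.src g := ((Set.Finite.mem_toFinset _).mp ht1).2
    have e2 : Λ.rng h2 = Λ.src p := ((Set.Finite.mem_toFinset _).mp ht2).2
    refine ⟨e1, e2, ?_⟩
    have hs := congrArg Λ.src heq
    rwa [src_cmp e1.symm, src_cmp e2.symm] at hs
  · rw [F.expandS' hrf g (fun j => m j - Λ.deg g j), F.expandS hrf p (fun j => m j - Λ.deg p j),
      Finset.sum_mul_sum, Finset.sum_filter, ← Finset.sum_product']
    refine Finset.sum_congr rfl fun t ht => ?_
    rw [Finset.mem_product] at ht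
    obtain ⟨ht1, ht2⟩ := ht
    have hm1 : t.1 ∈ Λ.LeSet fun j => m j - Λ.deg g j := ((Set.Finite.mem_toFinset _).mp ht1).1
    have e1 : Λ.rng t.1 = Λ.src g := ((Set.Finite.mem_toFinset _).mp ht1).2
    have hm2 : t.2 ∈ Λ.LeSet fun j => m j - Λ.deg p j := ((Set.Finite.mem_toFinset _).mp ht2).1
    have e2 : Λ.rng t.2 = Λ.src p := ((Set.Finite.mem_toFinset _).mp ht2).2
    have hgm' : cmp Λ g t.1 ∈ Λ.LeSet m := comp_mem_LeSet hgm hm1 e1.symm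
    have hpm' : cmp Λ p t.2 ∈ Λ.LeSet m := comp_mem_LeSet hpm hm2 e2.symm
    calc (F.S t.1 * F.S' (cmp Λ g t.1)) * (F.S (cmp Λ p t.2) * F.S' t.2)
        = F.S t.1 * (F.S' (cmp Λ g t.1) * F.S (cmp Λ p t.2)) * F.S' t.2 := by
          rw [mul_assoc, mul_assoc, mul_assoc]
      _ = F.S t.1 * (if cmp Λ g t.1 = cmp Λ p t.2 then F.P (Λ.src (cmp Λ g t.1)) else 0)
            * F.S' t.2 := by rw [F.KP3' hgm' hpm']
      _ = if cmp Λ g t.1 = cmp Λ p t.2 then F.S t.1 * F.S' t.2 else 0 := by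
          split_ifs with hc
          · have hs1 : Λ.src (cmp Λ g t.1) = Λ.src t.1 := src_cmp e1.symm
            have hs2 : Λ.src t.1 = Λ.src t.2 := by
              have hs := congrArg Λ.src hc
              rwa [src_cmp e1.symm, src_cmp e2.symm] at hs
            rw [hs1, hs2, mul_assoc, F.P_S' t.2]
          · rw [mul_zero, zero_mul]

lemma KPFamily.gen_mul (hrf : Λ.RowFinite) {f g p q : Λ.Mor} (hfg : Λ.src f = Λ.src g)
    (hpq : Λ.src p = Λ.src q) :
    ∃ T : Finset (Λ.Mor × Λ.Mor),
      ((F.S f * F.S' g) * (F.S p * F.S' q) = ∑ t ∈ T, F.S (cmp Λ f t.1) * F.S' (cmp Λ q t.2)) ∧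
      ∀ t ∈ T, Λ.src (cmp Λ f t.1) = Λ.src (cmp Λ q t.2) ∧
        Reach Λ (Λ.src g) (Λ.src (cmp Λ f t.1)) ∧ Reach Λ (Λ.src p) (Λ.src (cmp Λ f t.1)) := by
  obtain ⟨T, hT, heq⟩ := F.S'_mul_S_expand hrf g p
  refine ⟨T, ?_, ?_⟩
  · have hstep : (F.S f * F.S' g) * (F.S p * F.S' q)
        = F.S f * (F.S' g * F.S p) * F.S' q := by
      rw [mul_assoc, mul_assoc, mul_assoc]
    rw [hstep, heq, Finset.mul_sum, Finset.sum_mul]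
    refine Finset.sum_congr rfl fun t ht => ?_
    obtain ⟨e1, e2, e3⟩ := hT t ht
    calc F.S f * (F.S t.1 * F.S' t.2) * F.S' q
        = (F.S f * F.S t.1) * (F.S' t.2 * F.S' q) := by rw [mul_assoc, mul_assoc, mul_assoc]
      _ = F.S (cmp Λ f t.1) * F.S' (cmp Λ q t.2) := by
          rw [F.S_mul_S (hfg.trans e1.symm), F.S'_mul_S' (hpq.symm.trans e2.symm)]
  · intro t ht
    obtain ⟨e1, e2, e3⟩ := hT t ht
    have s1 : Λ.src (cmp Λ f t.1) = Λ.src t.1 := src_cmp (hfg.trans e1.symm)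
    have s2 : Λ.src (cmp Λ q t.2) = Λ.src t.2 := src_cmp (hpq.symm.trans e2.symm)
    exact ⟨by rw [s1, s2, e3], ⟨t.1, e1, s1.symm⟩, ⟨t.2, e2, by rw [s1, e3]⟩⟩

end AuxKP

end KGraph

namespace KGraph

section AuxAlg

variable {k : ℕ} {Λ : KGraph k} {R : Type} [CommRing R] {A : Type}
  [NonUnitalRing A] [Module R A] [SMulCommClass R A A] [IsScalarTower R A A]

lemma IsKPAlgebra.exists_localUnit (K : IsKPAlgebra Λ R A) (a : A) :
    ∃ V : Finset Λ.Obj, ∀ W : Finset Λ.Obj, V ⊆ W → (∑ v ∈ W, K.fam.P v) * a = a := by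
  classical
  have hsp := K.spanning a
  induction hsp using Submodule.span_induction with
  | mem x hx =>
    obtain ⟨f, g, hfg, rfl⟩ := hx
    refine ⟨{Λ.rng f}, fun W hW => ?_⟩
    rw [Finset.sum_mul]
    have hterm : ∀ v ∈ W, K.fam.P v * (K.fam.S f * K.fam.S' g)
        = if v = Λ.rng f then K.fam.S f * K.fam.S' g else 0 := by
      intro v _
      rw [← mul_assoc, K.fam.P_mul_S]
      split_ifs with h
      · rfl
      · rw [zero_mul]
    rw [Finset.sum_congr rfl hterm, Finset.sum_ite_eq' W (Λ.rng f)
      (fun _ => K.fam.S f * K.fam.S' g), if_pos (hW (Finset.mem_singleton_self _))]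
  | zero => exact ⟨∅, fun W _ => by rw [mul_zero]⟩
  | add x y hx hy ihx ihy =>
    obtain ⟨V1, h1⟩ := ihx
    obtain ⟨V2, h2⟩ := ihy
    exact ⟨V1 ∪ V2, fun W hW => by
      rw [mul_add, h1 W (Finset.union_subset_iff.mp hW).1,
        h2 W (Finset.union_subset_iff.mp hW).2]⟩
  | smul r x hx ih =>
    obtain ⟨V, h⟩ := ih
    exact ⟨V, fun W hW => by rw [mul_smul_comm, h W hW]⟩

lemma IsKPAlgebra.smul_mem' (K : IsKPAlgebra Λ R A) (I : TwoSidedIdeal A) (r : R) {a : A}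
    (ha : a ∈ I) : r • a ∈ I := by
  obtain ⟨V, hV⟩ := K.exists_localUnit a
  have h := hV V subset_rfl
  have heq : r • a = (r • ∑ v ∈ V, K.fam.P v) * a := by rw [smul_mul_assoc, h]
  rw [heq]
  exact I.mul_mem_left _ _ ha

/-- A two-sided ideal of a Kumjian–Pask algebra, seen as an `R`-submodule. -/
def IsKPAlgebra.tsiMod (K : IsKPAlgebra Λ R A) (I : TwoSidedIdeal A) : Submodule R A where
  carrier := I
  add_mem' := fun h1 h2 => I.add_mem h1 h2
  zero_mem' := I.zero_mem
  smul_mem' := fun r a ha => K.smul_mem' I r ha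

lemma IsKPAlgebra.mem_tsiMod (K : IsKPAlgebra Λ R A) (I : TwoSidedIdeal A) {a : A} :
    a ∈ K.tsiMod I ↔ a ∈ I := Iff.rfl

lemma IsKPAlgebra.IH_mul_left (K : IsKPAlgebra Λ R A) (hrf : Λ.RowFinite) {H : Set Λ.Obj}
    (hH : Λ.Hereditary H) {y : A} (hy : y ∈ K.fam.IH H) (a : A) : a * y ∈ K.fam.IH H := by
  induction hy using Submodule.span_induction with
  | mem x hx =>
    obtain ⟨p, q, hpq, hpH, rfl⟩ := hx
    have hsp := K.spanning a
    induction hsp using Submodule.span_induction with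
    | mem b hb =>
      obtain ⟨f, g, hfg, rfl⟩ := hb
      obtain ⟨T, heq, hT⟩ := K.fam.gen_mul hrf hfg hpq
      rw [heq]
      refine Submodule.sum_mem _ fun t ht => Submodule.subset_span ?_
      exact ⟨_, _, (hT t ht).1, hH _ _ hpH (hT t ht).2.2, rfl⟩
    | zero => rw [zero_mul]; exact Submodule.zero_mem _
    | add x1 x2 h1 h2 ih1 ih2 => rw [add_mul]; exact Submodule.add_mem _ ih1 ih2
    | smul r x1 h1 ih => rw [smul_mul_assoc]; exact Submodule.smul_mem _ _ ih
  | zero => rw [mul_zero]; exact Submodule.zero_mem _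
  | add y1 y2 h1 h2 ih1 ih2 => rw [mul_add]; exact Submodule.add_mem _ ih1 ih2
  | smul r y1 h1 ih => rw [mul_smul_comm]; exact Submodule.smul_mem _ _ ih

lemma IsKPAlgebra.IH_mul_right (K : IsKPAlgebra Λ R A) (hrf : Λ.RowFinite) {H : Set Λ.Obj}
    (hH : Λ.Hereditary H) {y : A} (hy : y ∈ K.fam.IH H) (a : A) : y * a ∈ K.fam.IH H := by
  induction hy using Submodule.span_induction with
  | mem x hx =>
    obtain ⟨p, q, hpq, hpH, rfl⟩ := hx
    have hsp := K.spanning a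
    induction hsp using Submodule.span_induction with
    | mem b hb =>
      obtain ⟨f, g, hfg, rfl⟩ := hb
      obtain ⟨T, heq, hT⟩ := K.fam.gen_mul hrf hpq hfg
      rw [heq]
      refine Submodule.sum_mem _ fun t ht => Submodule.subset_span ?_
      refine ⟨_, _, (hT t ht).1, hH _ _ (hpq ▸ hpH) (hT t ht).2.1, rfl⟩
    | zero => rw [mul_zero]; exact Submodule.zero_mem _
    | add x1 x2 h1 h2 ih1 ih2 => rw [mul_add]; exact Submodule.add_mem _ ih1 ih2
    | smul r x1 h1 ih => rw [mul_smul_comm]; exact Submodule.smul_mem _ _ ih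
  | zero => rw [zero_mul]; exact Submodule.zero_mem _
  | add y1 y2 h1 h2 ih1 ih2 => rw [add_mul]; exact Submodule.add_mem _ ih1 ih2
  | smul r y1 h1 ih => rw [smul_mul_assoc]; exact Submodule.smul_mem _ _ ih

end AuxAlg

section Homog

variable {k : ℕ} {Λ : KGraph k} {R : Type} [Field R] {A : Type}
  [NonUnitalRing A] [Module R A] [SMulCommClass R A A] [IsScalarTower R A A]

lemma KPFamily.homog_mem_IH (F : KPFamily Λ R A) (hrf : Λ.RowFinite)
    (I : TwoSidedIdeal A) (hsm : ∀ (r : R) {a : A}, a ∈ I → r • a ∈ I)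
    (n : Fin k → ℤ) {b : A} (hb : b ∈ F.component n) (hbI : b ∈ I) :
    b ∈ F.IH {v | F.P v ∈ I} := by
  classical
  obtain ⟨m, c, gg, hsum⟩ := Submodule.mem_span_set'.mp hb
  rcases Nat.eq_zero_or_pos m with hm | hm
  · subst hm
    rw [← hsum, Fin.sum_univ_zero]
    exact Submodule.zero_mem _
  · have hgen : ∀ i : Fin m, ∃ f g : Λ.Mor, Λ.src f = Λ.src g ∧
        (fun j => (Λ.deg f j : ℤ) - (Λ.deg g j : ℤ)) = n ∧ (gg i : A) = F.S f * F.S' g :=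
      fun i => (gg i).2
    choose ff gl hsrc hdeg hval using hgen
    set N : Fin k → ℕ := Finset.univ.sup fun i => Λ.deg (gl i) with hN
    have hNg : ∀ i, Λ.deg (gl i) ≤ N := by
      intro i
      rw [hN]
      exact Finset.le_sup (f := fun i => Λ.deg (gl i)) (Finset.mem_univ i)
    have hNn : ∀ j, 0 ≤ (N j : ℤ) + n j := by
      intro j
      have hne : (Finset.univ : Finset (Fin m)).Nonempty := ⟨⟨0, hm⟩, Finset.mem_univ _⟩
      obtain ⟨i0, -, hi0⟩ := Finset.exists_mem_eq_sup Finset.univ hne fun i => Λ.deg (gl i) j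
      have hNj : N j = Λ.deg (gl i0) j := by
        rw [hN, Finset.sup_apply, hi0]
      have hdj : (Λ.deg (ff i0) j : ℤ) - (Λ.deg (gl i0) j : ℤ) = n j := congrFun (hdeg i0) j
      rw [hNj]
      omega
    set N' : Fin k → ℕ := fun j => ((N j : ℤ) + n j).toNat with hN'def
    have hN' : ∀ j, (N' j : ℤ) = (N j : ℤ) + n j := fun j => Int.toNat_of_nonneg (hNn j)
    have hdegf : ∀ i j, (Λ.deg (ff i) j : ℤ) = (Λ.deg (gl i) j : ℤ) + n j := by
      intro i j
      have hdj : (Λ.deg (ff i) j : ℤ) - (Λ.deg (gl i) j : ℤ) = n j := congrFun (hdeg i) j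
      omega
    have hffN' : ∀ i, Λ.deg (ff i) ≤ N' := by
      intro i j
      have h1 := hdegf i j
      have h2 : Λ.deg (gl i) j ≤ N j := hNg i j
      have h3 := hN' j
      show Λ.deg (ff i) j ≤ N' j
      omega
    have hEq : ∀ i, (fun j => N' j - Λ.deg (ff i) j) = fun j => N j - Λ.deg (gl i) j := by
      intro i
      funext j
      have h1 := hdegf i j
      have h2 := hN' j
      omega
    set Ei : Fin m → Finset Λ.Mor :=
      fun i => (ES_finite hrf (Λ.src (gl i)) fun j => N j - Λ.deg (gl i) j).toFinset with hEi
    set U : Finset ((_ : Fin m) × Λ.Mor) := Finset.univ.sigma fun i => Ei i with hU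
    set aa : ((_ : Fin m) × Λ.Mor) → Λ.Mor := fun σ => cmp Λ (ff σ.1) σ.2 with haa
    set bb : ((_ : Fin m) × Λ.Mor) → Λ.Mor := fun σ => cmp Λ (gl σ.1) σ.2 with hbb
    have hUfact : ∀ σ ∈ U, Λ.rng σ.2 = Λ.src (gl σ.1)
        ∧ σ.2 ∈ Λ.LeSet fun j => N j - Λ.deg (gl σ.1) j := by
      intro σ hσ
      rw [hU, Finset.mem_sigma] at hσ
      have hm2 := (Set.Finite.mem_toFinset _).mp hσ.2
      exact ⟨hm2.2, hm2.1⟩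
    have hbbLe : ∀ σ ∈ U, bb σ ∈ Λ.LeSet N := fun σ hσ =>
      comp_mem_LeSet (hNg σ.1) (hUfact σ hσ).2 (hUfact σ hσ).1.symm
    have haaLe : ∀ σ ∈ U, aa σ ∈ Λ.LeSet N' := by
      intro σ hσ
      refine comp_mem_LeSet (hffN' σ.1) ?_ ?_
      · rw [hEq σ.1]
        exact (hUfact σ hσ).2
      · rw [hsrc σ.1]
        exact (hUfact σ hσ).1.symm
    have hsab : ∀ σ ∈ U, Λ.src (aa σ) = Λ.src (bb σ) := by
      intro σ hσ
      rw [haa, hbb]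
      rw [src_cmp (by rw [hsrc σ.1]; exact (hUfact σ hσ).1.symm),
        src_cmp (hUfact σ hσ).1.symm]
    have hexp : ∀ i : Fin m, (gg i : A)
        = ∑ h ∈ Ei i, F.S (cmp Λ (ff i) h) * F.S' (cmp Λ (gl i) h) := by
      intro i
      rw [hval i, hEi]
      exact F.expand_pair hrf (hsrc i) _
    have hbU : b = ∑ σ ∈ U, c σ.1 • (F.S (aa σ) * F.S' (bb σ)) := by
      rw [← hsum, hU, haa, hbb, Finset.sum_sigma]
      refine Finset.sum_congr rfl fun i _ => ?_
      rw [hexp i, Finset.smul_sum]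
    have hext : ∀ σ₀ ∈ U, (∑ σ ∈ U.filter fun σ => (aa σ, bb σ) = (aa σ₀, bb σ₀), c σ.1)
        • F.P (Λ.src (aa σ₀)) ∈ I := by
      intro σ₀ hσ₀
      have hcalc : F.S' (aa σ₀) * b * F.S (bb σ₀)
          = (∑ σ ∈ U.filter fun σ => (aa σ, bb σ) = (aa σ₀, bb σ₀), c σ.1)
            • F.P (Λ.src (aa σ₀)) := by
        calc F.S' (aa σ₀) * b * F.S (bb σ₀)
            = ∑ σ ∈ U, F.S' (aa σ₀) * (c σ.1 • (F.S (aa σ) * F.S' (bb σ))) * F.S (bb σ₀) := by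
              rw [hbU, Finset.mul_sum, Finset.sum_mul]
          _ = ∑ σ ∈ U, if (aa σ, bb σ) = (aa σ₀, bb σ₀)
                then c σ.1 • F.P (Λ.src (aa σ₀)) else 0 := by
              refine Finset.sum_congr rfl fun σ hσ => ?_
              have hk1 : F.S' (aa σ₀) * F.S (aa σ)
                  = if aa σ₀ = aa σ then F.P (Λ.src (aa σ₀)) else 0 :=
                F.KP3' (haaLe σ₀ hσ₀) (haaLe σ hσ)
              have hk2 : F.S' (bb σ) * F.S (bb σ₀)
                  = if bb σ = bb σ₀ then F.P (Λ.src (bb σ)) else 0 :=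
                F.KP3' (hbbLe σ hσ) (hbbLe σ₀ hσ₀)
              have hstep : F.S' (aa σ₀) * (c σ.1 • (F.S (aa σ) * F.S' (bb σ))) * F.S (bb σ₀)
                  = c σ.1 • ((F.S' (aa σ₀) * F.S (aa σ)) * (F.S' (bb σ) * F.S (bb σ₀))) := by
                rw [mul_smul_comm, smul_mul_assoc]
                congr 1
                rw [← mul_assoc (F.S' (aa σ₀)) (F.S (aa σ)) (F.S' (bb σ)),
                  mul_assoc (F.S' (aa σ₀) * F.S (aa σ))]
              rw [hstep, hk1, hk2]
              by_cases h1 : aa σ₀ = aa σ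
              · by_cases h2 : bb σ = bb σ₀
                · rw [if_pos h1, if_pos h2,
                    if_pos (show (aa σ, bb σ) = (aa σ₀, bb σ₀) by rw [h1, h2])]
                  have hs : Λ.src (bb σ) = Λ.src (aa σ₀) := by rw [← hsab σ hσ, ← h1]
                  rw [hs, F.P_mul_self]
                · rw [if_pos h1, if_neg h2, mul_zero, smul_zero,
                    if_neg (fun hc => h2 (congrArg Prod.snd hc))]
              · rw [if_neg h1, zero_mul, smul_zero,
                  if_neg (fun hc => h1 (congrArg Prod.fst hc).symm)]
          _ = ∑ σ ∈ U.filter (fun σ => (aa σ, bb σ) = (aa σ₀, bb σ₀)),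
                c σ.1 • F.P (Λ.src (aa σ₀)) := (Finset.sum_filter _ _).symm
          _ = (∑ σ ∈ U.filter fun σ => (aa σ, bb σ) = (aa σ₀, bb σ₀), c σ.1)
                • F.P (Λ.src (aa σ₀)) := (Finset.sum_smul).symm
      rw [← hcalc]
      exact I.mul_mem_right _ _ (I.mul_mem_left _ _ hbI)
    have hgroup : b = ∑ t ∈ U.image fun σ => (aa σ, bb σ),
        (∑ σ ∈ U.filter fun σ => (aa σ, bb σ) = t, c σ.1) • (F.S t.1 * F.S' t.2) := by
      have hfib := Finset.sum_fiberwise_of_maps_to (s := U)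
        (t := U.image fun σ => (aa σ, bb σ)) (g := fun σ => (aa σ, bb σ))
        (fun σ hσ => Finset.mem_image_of_mem _ hσ)
        (fun σ => c σ.1 • (F.S (aa σ) * F.S' (bb σ)))
      rw [hbU, ← hfib]
      refine Finset.sum_congr rfl fun t ht => ?_
      calc ∑ σ ∈ U.filter (fun σ => (aa σ, bb σ) = t), c σ.1 • (F.S (aa σ) * F.S' (bb σ))
          = ∑ σ ∈ U.filter (fun σ => (aa σ, bb σ) = t), c σ.1 • (F.S t.1 * F.S' t.2) := by
            refine Finset.sum_congr rfl fun σ hσ => ?_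
            have hkey := (Finset.mem_filter.mp hσ).2
            rw [← hkey]
        _ = (∑ σ ∈ U.filter fun σ => (aa σ, bb σ) = t, c σ.1) • (F.S t.1 * F.S' t.2) :=
            (Finset.sum_smul).symm
    rw [hgroup]
    refine Submodule.sum_mem _ fun t ht => ?_
    by_cases hD : (∑ σ ∈ U.filter fun σ => (aa σ, bb σ) = t, c σ.1) = 0
    · rw [hD, zero_smul]
      exact Submodule.zero_mem _
    · obtain ⟨σ₀, hσ₀U, hkey⟩ := Finset.mem_image.mp ht
      have hkey' : (aa σ₀, bb σ₀) = t := hkey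
      have ht1 : t.1 = aa σ₀ := (congrArg Prod.fst hkey').symm
      have ht2 : t.2 = bb σ₀ := (congrArg Prod.snd hkey').symm
      have hPin : F.P (Λ.src (aa σ₀)) ∈ I := by
        have h1 := hext σ₀ hσ₀U
        simp only [hkey'] at h1
        have h2 := hsm (∑ σ ∈ U.filter fun σ => (aa σ, bb σ) = t, c σ.1)⁻¹ h1
        rwa [inv_smul_smul₀ hD] at h2
      refine Submodule.smul_mem _ _ (Submodule.subset_span ?_)
      refine ⟨t.1, t.2, ?_, ?_, rfl⟩
      · rw [ht1, ht2]
        exact hsab σ₀ hσ₀U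
      · show F.P (Λ.src t.1) ∈ I
        rw [ht1]
        exact hPin

end Homog

end KGraph

/-- **Proposition 4.7 (1).** If `R` is a field and `Λ` a row-finite locally convex
`k`-graph, then every prime graded ideal of `KP_R(Λ)` is of the form `I_H` for a
saturated hereditary `H ⊆ Λ⁰` such that `Λ⁰ ∖ H` is a maximal tail. -/
theorem prime_graded_ideal_eq_IH
    {k : ℕ} (Λ : KGraph k) (hrf : Λ.RowFinite) (hlc : Λ.LocallyConvex)
    (R : Type) [Field R] (A : Type) [NonUnitalRing A] [Module R A]
    [SMulCommClass R A A] [IsScalarTower R A A]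
    (K : KGraph.IsKPAlgebra Λ R A) :
    ∀ I : TwoSidedIdeal A, K.fam.IsGradedIdeal I → IsPrimeTwoSidedIdeal I →
      ∃ H : Set Λ.Obj, Λ.Saturated H ∧ Λ.Hereditary H ∧ Λ.MaximalTail Hᶜ ∧
        (I : Set A) = (K.fam.IH H : Set A) := by
  intro I hgr hpr
  classical
  have hsm : ∀ (r : R) {a : A}, a ∈ I → r • a ∈ I := fun r a ha => K.smul_mem' I r ha
  -- the candidate hereditary saturated set
  -- `H = {v | p_v ∈ I}`
  -- I_H ⊆ I
  have hIH_sub : (K.fam.IH {v | K.fam.P v ∈ I} : Set A) ⊆ (I : Set A) := by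
    intro x hx
    have hle : K.fam.IH {v | K.fam.P v ∈ I} ≤ K.tsiMod I := by
      refine Submodule.span_le.mpr ?_
      rintro y ⟨f, g, hfg, hfH, rfl⟩
      show K.fam.S f * K.fam.S' g ∈ I
      have heq : K.fam.S f * K.fam.S' g
          = K.fam.S f * (K.fam.P (Λ.src f) * K.fam.S' g) := by
        rw [hfg, K.fam.P_S']
      rw [heq]
      exact I.mul_mem_left _ _ (I.mul_mem_right _ _ hfH)
    exact hle hx
  -- I ⊆ I_H
  have hI_sub : (I : Set A) ⊆ (K.fam.IH {v | K.fam.P v ∈ I} : Set A) := by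
    intro a ha
    have h1 := hgr ha
    have hle : Submodule.span R (⋃ n : Fin k → ℤ,
        ((I : Set A) ∩ (K.fam.component n : Set A))) ≤ K.fam.IH {v | K.fam.P v ∈ I} := by
      refine Submodule.span_le.mpr ?_
      rintro x hx
      rw [Set.mem_iUnion] at hx
      obtain ⟨n, hxI, hxc⟩ := hx
      exact K.fam.homog_mem_IH hrf I hsm n hxc hxI
    exact hle h1
  -- hereditary
  have hhered : Λ.Hereditary {v | K.fam.P v ∈ I} := by
    intro v w hv hvw
    obtain ⟨f, hr, hs⟩ := hvw
    have h3 := K.fam.KP3' (KGraph.self_mem_LeSet f) (KGraph.self_mem_LeSet f)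
    rw [if_pos rfl] at h3
    show K.fam.P w ∈ I
    have heq : K.fam.P w = K.fam.S' f * (K.fam.P v * K.fam.S f) := by
      rw [← hr, K.fam.P_S, h3, hs]
    rw [heq]
    exact I.mul_mem_left _ _ (I.mul_mem_right _ _ hv)
  -- saturated
  have hsat : Λ.Saturated {v | K.fam.P v ∈ I} := by
    intro v i hall
    show K.fam.P v ∈ I
    rw [K.fam.KP4' hrf v (unitVec i)]
    refine sum_mem fun g hg => ?_
    obtain ⟨hle, hr⟩ := (Set.Finite.mem_toFinset _).mp hg
    have hPs : K.fam.P (Λ.src g) ∈ I := hall g hle hr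
    have heq : K.fam.S g * K.fam.S' g
        = K.fam.S g * (K.fam.P (Λ.src g) * K.fam.S' g) := by rw [K.fam.P_S']
    rw [heq]
    exact I.mul_mem_left _ _ (I.mul_mem_right _ _ hPs)
  -- nonemptiness of the complement
  have hproper : ({v | K.fam.P v ∈ I}ᶜ : Set Λ.Obj).Nonempty := by
    rw [Set.nonempty_compl]
    intro huniv
    apply hpr.1
    refine Set.eq_univ_of_forall fun a => ?_
    show a ∈ I
    have hsp := K.spanning a
    induction hsp using Submodule.span_induction with
    | mem x hx =>
      obtain ⟨f, g, hfg, rfl⟩ := hx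
      have hPf : K.fam.P (Λ.src f) ∈ I := by
        have hmem : Λ.src f ∈ ({v | K.fam.P v ∈ I} : Set Λ.Obj) := by
          rw [huniv]; trivial
        exact hmem
      have heq : K.fam.S f * K.fam.S' g
          = K.fam.S f * (K.fam.P (Λ.src f) * K.fam.S' g) := by
        rw [hfg, K.fam.P_S']
      rw [heq]
      exact I.mul_mem_left _ _ (I.mul_mem_right _ _ hPf)
    | zero => exact I.zero_mem
    | add x y hx hy ihx ihy => exact I.add_mem ihx ihy
    | smul r x hx ih => exact hsm r ih
  -- (MT1)
  have hmt1 : ∀ v w : Λ.Obj, w ∈ ({v | K.fam.P v ∈ I}ᶜ : Set Λ.Obj) →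
      (∃ f : Λ.Mor, Λ.rng f = v ∧ Λ.src f = w) → v ∈ ({v | K.fam.P v ∈ I}ᶜ : Set Λ.Obj) := by
    intro v w hw hvw hv
    exact hw (hhered v w hv hvw)
  -- (MT2)
  have hmt2 : ∀ v ∈ ({v | K.fam.P v ∈ I}ᶜ : Set Λ.Obj), ∀ i : Fin k,
      ∃ f ∈ Λ.LeSet (unitVec i), Λ.rng f = v ∧ Λ.src f ∈ ({v | K.fam.P v ∈ I}ᶜ : Set Λ.Obj) := by
    intro v hv i
    by_contra hno
    push_neg at hno
    exact hv (hsat v i fun f hf hr => Set.not_notMem.mp fun hcon => (hno f hf hr) hcon)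
  -- (MT3)
  have hmt3 : ∀ v₁ ∈ ({v | K.fam.P v ∈ I}ᶜ : Set Λ.Obj),
      ∀ v₂ ∈ ({v | K.fam.P v ∈ I}ᶜ : Set Λ.Obj),
      ∃ w ∈ ({v | K.fam.P v ∈ I}ᶜ : Set Λ.Obj),
        (∃ f : Λ.Mor, Λ.rng f = v₁ ∧ Λ.src f = w) ∧
        (∃ f : Λ.Mor, Λ.rng f = v₂ ∧ Λ.src f = w) := by
    intro v₁ hv₁ v₂ hv₂
    by_contra hno
    have hcomm : ∀ u, KGraph.Reach Λ v₁ u → KGraph.Reach Λ v₂ u → K.fam.P u ∈ I := by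
      intro u h1 h2
      by_contra huH
      exact hno ⟨u, huH, h1, h2⟩
    have hEnd : ∀ v : Λ.Obj, ∃ J : TwoSidedIdeal A,
        (J : Set A) = (K.fam.IH {w | KGraph.Reach Λ v w} : Set A) := by
      intro v
      exact ⟨TwoSidedIdeal.mk' (K.fam.IH {w | KGraph.Reach Λ v w} : Set A) (Submodule.zero_mem _)
        (fun h1 h2 => Submodule.add_mem _ h1 h2) (fun h1 => Submodule.neg_mem _ h1)
        (fun {x y} hy => K.IH_mul_left hrf (KGraph.hereditary_setOf_reach v) hy x)
        (fun {x y} hx => K.IH_mul_right hrf (KGraph.hereditary_setOf_reach v) hx y),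
        TwoSidedIdeal.coe_mk' _ _ _ _ _ _⟩
    obtain ⟨J₁, hJ₁⟩ := hEnd v₁
    obtain ⟨J₂, hJ₂⟩ := hEnd v₂
    have hcross : ∀ x ∈ J₁, ∀ y ∈ J₂, x * y ∈ I := by
      intro x hx y hy
      have hx' : x ∈ K.fam.IH {w | KGraph.Reach Λ v₁ w} := by
        have : x ∈ (J₁ : Set A) := hx
        rw [hJ₁] at this
        exact this
      have hy' : y ∈ K.fam.IH {w | KGraph.Reach Λ v₂ w} := by
        have : y ∈ (J₂ : Set A) := hy
        rw [hJ₂] at this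
        exact this
      clear hx hy
      induction hx' using Submodule.span_induction with
      | mem x0 hx0 =>
        obtain ⟨p, q, hpq, hpT, rfl⟩ := hx0
        induction hy' using Submodule.span_induction with
        | mem y0 hy0 =>
          obtain ⟨f, g, hfg2, hfT, rfl⟩ := hy0
          obtain ⟨T, heq, hT⟩ := K.fam.gen_mul hrf hpq hfg2
          rw [heq]
          refine sum_mem fun t ht => ?_
          obtain ⟨hseq, hr1, hr2⟩ := hT t ht
          have huH : K.fam.P (Λ.src (KGraph.cmp Λ p t.1)) ∈ I :=
            hcomm _ (KGraph.reach_trans (hpq ▸ hpT) hr1) (KGraph.reach_trans hfT hr2)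
          have heq2 : K.fam.S (KGraph.cmp Λ p t.1) * K.fam.S' (KGraph.cmp Λ g t.2)
              = K.fam.S (KGraph.cmp Λ p t.1)
                * (K.fam.P (Λ.src (KGraph.cmp Λ p t.1)) * K.fam.S' (KGraph.cmp Λ g t.2)) := by
            rw [hseq, K.fam.P_S']
          rw [heq2]
          exact I.mul_mem_left _ _ (I.mul_mem_right _ _ huH)
        | zero => rw [mul_zero]; exact I.zero_mem
        | add a b ha hb iha ihb => rw [mul_add]; exact I.add_mem iha ihb
        | smul r a ha ih => rw [mul_smul_comm]; exact hsm r ih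
      | zero => rw [zero_mul]; exact I.zero_mem
      | add a b ha hb iha ihb => rw [add_mul]; exact I.add_mem iha ihb
      | smul r a ha ih => rw [smul_mul_assoc]; exact hsm r ih
    have hPmem : ∀ v : Λ.Obj, K.fam.P v ∈ K.fam.IH {w | KGraph.Reach Λ v w} := by
      intro v
      refine Submodule.subset_span ⟨Λ.id v, Λ.id v, rfl, ?_, K.fam.P_eq_S_id_mul v⟩
      show KGraph.Reach Λ v (Λ.src (Λ.id v))
      rw [Λ.src_id]
      exact KGraph.reach_self v
    rcases hpr.2 J₁ J₂ hcross with hsub | hsub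
    · refine hv₁ ?_
      show K.fam.P v₁ ∈ I
      have h2 : K.fam.P v₁ ∈ (J₁ : Set A) := by
        rw [hJ₁]
        exact hPmem v₁
      exact hsub h2
    · refine hv₂ ?_
      show K.fam.P v₂ ∈ I
      have h2 : K.fam.P v₂ ∈ (J₂ : Set A) := by
        rw [hJ₂]
        exact hPmem v₂
      exact hsub h2
  exact ⟨{v | K.fam.P v ∈ I}, hsat, hhered, ⟨hproper, hmt1, hmt2, hmt3⟩,
    Set.Subset.antisymm hI_sub hIH_sub⟩
end
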